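/- arXiv:1103.0136 — 8 statements merged into one kernel-verified Lean document; each statement's English description precedes it below -/
import Mathlib

section
/- Let H be a (real or complex) Hilbert space, A a bounded self-adjoint operator on H with ||A|| ≤ 1, and f* a unit vector with A f* = f*. Define λ₁ := sup{⟨Af,f⟩ : ||f|| = 1, ⟨f,f*⟩ = 0}. Suppose e is a unit vector in H with ⟨f*,e⟩ ≠ 0, and suppose that sup{⟨Af,f⟩ : ||f|| = 1, ⟨f,e⟩ = 0} = 1. Then λ₁ = 1. -/
open scoped InnerProductSpace

/-- If `A` is a self-adjoint contraction on a Hilbert space, `f*` a unit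
eigenvector with `A f* = f*`, and `e` a unit vector not orthogonal to `f*` such that the
supremum of the quadratic form of `A` over unit vectors orthogonal to `e` equals `1`, then
`λ₁ := sup {⟨Af,f⟩ : ‖f‖ = 1, ⟨f,f*⟩ = 0}` equals `1`. -/
theorem stmt0 {𝕜 H : Type*} [RCLike 𝕜] [NormedAddCommGroup H] [InnerProductSpace 𝕜 H]
    [CompleteSpace H]
    (A : H →L[𝕜] H) (hA : IsSelfAdjoint A) (hAnorm : ‖A‖ ≤ 1)
    (fstar : H) (hfstar : ‖fstar‖ = 1) (hAfstar : A fstar = fstar)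
    (e : H) (he : ‖e‖ = 1) (hfe : ⟪fstar, e⟫_𝕜 ≠ 0)
    (hsup : sSup {r : ℝ | ∃ f : H, ‖f‖ = 1 ∧ ⟪f, e⟫_𝕜 = 0 ∧ RCLike.re ⟪A f, f⟫_𝕜 = r} = 1) :
    sSup {r : ℝ | ∃ f : H, ‖f‖ = 1 ∧ ⟪f, fstar⟫_𝕜 = 0 ∧ RCLike.re ⟪A f, f⟫_𝕜 = r} = 1 := by
  have hS := ContinuousLinearMap.isSelfAdjoint_iff_isSymmetric.mp hA
  -- general bound : quadratic form ≤ 1 on unit vectors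
  have hbound : ∀ f : H, ‖f‖ = 1 → RCLike.re ⟪A f, f⟫_𝕜 ≤ 1 := by
    intro f hf
    calc RCLike.re ⟪A f, f⟫_𝕜 ≤ ‖⟪A f, f⟫_𝕜‖ := RCLike.re_le_norm _
      _ ≤ ‖A f‖ * ‖f‖ := norm_inner_le_norm _ _
      _ ≤ (‖A‖ * ‖f‖) * ‖f‖ := by
          apply mul_le_mul_of_nonneg_right (A.le_opNorm f) (norm_nonneg f)
      _ = ‖A‖ := by rw [hf]; ring
      _ ≤ 1 := hAnorm
  set β : ℝ := ‖⟪fstar, e⟫_𝕜‖ with hβdef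
  have hβ : 0 < β := norm_pos_iff.mpr hfe
  set t₀ : ℝ := β ^ 2 / (1 + β ^ 2) with ht₀def
  have ht₀ : 0 < t₀ := by positivity
  -- key construction
  have key : ∀ f : H, ‖f‖ = 1 → ⟪f, e⟫_𝕜 = 0 →
      ∃ h : H, ‖h‖ = 1 ∧ ⟪h, fstar⟫_𝕜 = 0 ∧
        1 - (1 - RCLike.re ⟪A f, f⟫_𝕜) / t₀ ≤ RCLike.re ⟪A h, h⟫_𝕜 := by
    intro f hf hfe0
    set c : 𝕜 := ⟪fstar, f⟫_𝕜 with hc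
    set g : H := f - c • fstar with hg
    have hfg : f = c • fstar + g := by rw [hg]; abel
    have hstarstar : ⟪fstar, fstar⟫_𝕜 = 1 := by
      rw [inner_self_eq_norm_sq_to_K, hfstar]; norm_num
    have horth : ⟪fstar, g⟫_𝕜 = 0 := by
      rw [hg, inner_sub_right, inner_smul_right, hstarstar]; simp [hc]
    have horth' : ⟪g, fstar⟫_𝕜 = 0 := by
      rw [← inner_conj_symm, horth, map_zero]
    have hcg : ⟪c • fstar, g⟫_𝕜 = 0 := by rw [inner_smul_left, horth, mul_zero]
    -- Pythagoras
    have hpyth : ‖c‖ ^ 2 + ‖g‖ ^ 2 = 1 := by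
      have hns := @norm_add_sq 𝕜 H _ _ _ (c • fstar) g
      rw [← hfg, hcg] at hns
      simp only [map_zero, mul_zero, add_zero, norm_smul, hfstar, mul_one, hf] at hns
      nlinarith [hns]
    set t : ℝ := ‖g‖ ^ 2 with ht
    have htnn : 0 ≤ t := by positivity
    have hc2 : ‖c‖ ^ 2 = 1 - t := by linarith
    -- constraint from orthogonality to e
    have hconstraint : ‖c‖ * β ≤ ‖g‖ := by
      have h1 : (starRingEnd 𝕜) c * ⟪fstar, e⟫_𝕜 + ⟪g, e⟫_𝕜 = 0 := by
        rw [← inner_smul_left, ← inner_add_left, ← hfg, hfe0]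
      have h2 : ‖⟪g, e⟫_𝕜‖ = ‖c‖ * β := by
        have h3 : ⟪g, e⟫_𝕜 = -((starRingEnd 𝕜) c * ⟪fstar, e⟫_𝕜) := by
          linear_combination h1
        rw [h3, norm_neg, norm_mul, RCLike.norm_conj, hβdef]
      calc ‖c‖ * β = ‖⟪g, e⟫_𝕜‖ := h2.symm
        _ ≤ ‖g‖ * ‖e‖ := norm_inner_le_norm _ _
        _ = ‖g‖ := by rw [he, mul_one]
    have ht₀t : t₀ ≤ t := by
      have h3 : ‖c‖ ^ 2 * β ^ 2 ≤ t := by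
        have h4 := mul_self_le_mul_self (by positivity) hconstraint
        calc ‖c‖ ^ 2 * β ^ 2 = (‖c‖ * β) * (‖c‖ * β) := by ring
          _ ≤ ‖g‖ * ‖g‖ := h4
          _ = t := by rw [ht]; ring
      rw [hc2] at h3
      rw [ht₀def, div_le_iff₀ (by positivity)]
      nlinarith
    have htpos : 0 < t := lt_of_lt_of_le ht₀ ht₀t
    have hgnorm : ‖g‖ ≠ 0 := by
      intro h0; rw [ht, h0] at htpos; norm_num at htpos
    -- quadratic form decomposition
    have hAf : A f = c • fstar + A g := by
      rw [hfg, map_add, map_smul, hAfstar]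
    have hAgstar : ⟪A g, fstar⟫_𝕜 = 0 := by
      have h5 := hS g fstar
      simp only [ContinuousLinearMap.coe_coe] at h5
      rw [h5, hAfstar, horth']
    have hquad : ⟪A f, f⟫_𝕜 = (starRingEnd 𝕜) c * c + ⟪A g, g⟫_𝕜 := by
      rw [hAf]
      nth_rewrite 1 [hfg]
      simp only [inner_add_left, inner_add_right, inner_smul_left, inner_smul_right,
        hstarstar, horth, hAgstar]
      ring
    have hrel : RCLike.re ⟪A f, f⟫_𝕜 = (1 - t) + RCLike.re ⟪A g, g⟫_𝕜 := by
      rw [hquad, map_add, RCLike.conj_mul, ← RCLike.ofReal_pow, RCLike.ofReal_re, hc2]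
    -- the normalized vector
    set a : 𝕜 := ((‖g‖ : ℝ)⁻¹ : 𝕜) with ha
    refine ⟨a • g, ?_, ?_, ?_⟩
    · rw [norm_smul, ha, norm_inv, RCLike.norm_ofReal, abs_of_nonneg (norm_nonneg g),
        inv_mul_cancel₀ hgnorm]
    · rw [inner_smul_left, horth', mul_zero]
    · have hq2 : RCLike.re ⟪A (a • g), a • g⟫_𝕜 = t⁻¹ * RCLike.re ⟪A g, g⟫_𝕜 := by
        rw [map_smul, inner_smul_left, inner_smul_right, ha, map_inv₀, RCLike.conj_ofReal,
          ← RCLike.ofReal_inv, ← mul_assoc, ← RCLike.ofReal_mul, RCLike.re_ofReal_mul]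
        congr 1
        rw [ht, sq, mul_inv]
      rw [hq2]
      set d : ℝ := 1 - RCLike.re ⟪A f, f⟫_𝕜 with hd
      have hdnn : 0 ≤ d := by
        have := hbound f hf; rw [hd]; linarith
      have hAgg : RCLike.re ⟪A g, g⟫_𝕜 = t - d := by rw [hd]; linarith [hrel]
      rw [hAgg]
      have hdiv : d / t ≤ d / t₀ := div_le_div_of_nonneg_left hdnn ht₀ ht₀t
      have heq : t⁻¹ * (t - d) = 1 - d / t := by field_simp
      rw [heq]
      linarith
  -- main argument
  set T := {r : ℝ | ∃ f : H, ‖f‖ = 1 ∧ ⟪f, e⟫_𝕜 = 0 ∧ RCLike.re ⟪A f, f⟫_𝕜 = r} with hT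
  set S := {r : ℝ | ∃ f : H, ‖f‖ = 1 ∧ ⟪f, fstar⟫_𝕜 = 0 ∧ RCLike.re ⟪A f, f⟫_𝕜 = r} with hSdef
  have hSle : ∀ r ∈ S, r ≤ 1 := by
    rintro r ⟨f, hf1, _, hf3⟩; rw [← hf3]; exact hbound f hf1
  have hSbdd : BddAbove S := ⟨1, fun r hr => hSle r hr⟩
  have hTne : T.Nonempty := by
    by_contra hne
    rw [Set.not_nonempty_iff_eq_empty] at hne
    rw [hne, Real.sSup_empty] at hsup
    norm_num at hsup
  have hupper : sSup S ≤ 1 := Real.sSup_le hSle zero_le_one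
  have hlower : 1 ≤ sSup S := by
    refine le_of_forall_pos_le_add ?_
    intro ε hε
    have hδ : 0 < ε * t₀ := by positivity
    obtain ⟨r, hrT, hr⟩ := exists_lt_of_lt_csSup hTne (show 1 - ε * t₀ < sSup T by
      rw [hsup]; linarith)
    obtain ⟨f, hf1, hf2, hf3⟩ := hrT
    obtain ⟨h, hh1, hh2, hh3⟩ := key f hf1 hf2
    have hmem : RCLike.re ⟪A h, h⟫_𝕜 ∈ S := ⟨h, hh1, hh2, rfl⟩
    have hle := le_csSup hSbdd hmem
    have hfrac : (1 - r) / t₀ < ε := by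
      rw [div_lt_iff₀ ht₀]; linarith
    rw [hf3] at hh3
    linarith
  linarith
end

section
/- Let (p_x)_{x≥0} and (q_x)_{x≥1} be sequences in (0,1) with p_0 = 1 and p_x + q_x = 1 for x ≥ 1, and set π̃(0) = 1, π̃(x) = ∏_{k=1}^{x} p_{k−1}/q_k for x ≥ 1. If lim_{x→∞} p_x = p, lim_{x→∞} q_x = q and p < q, then δ := sup_{x≥1} ( ∑_{y=0}^{x−1} [π̃(y) p_y]^{−1} ) · ( ∑_{z=x}^{∞} π̃(z) ) < ∞. -/
open Filter Finset Topology
open scoped ENNReal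

/-!
Since `π̃ (y + 1) / π̃ y = p y / q (y + 1) → p / q < 1`, eventually `π̃ (n + 1) ≤ θ π̃ n` for some
`θ < 1`. Then the tail `∑_{z ≥ x} π̃ z` is at most `π̃ x / (1 - θ)`, while the partial sums of the
geometrically growing sequence `π̃⁻¹` are, up to a constant, at most `π̃ x⁻¹ / (1 - θ)`. As
`[π̃ y p y]⁻¹ = [π̃ (y + 1) q (y + 1)]⁻¹` and `q` is bounded away from `0`, the two factors of
Chen's product compensate each other.
-/

/-- Chen's constant `δ`: `a y` plays the role of `[π̃(y) p_y]⁻¹` and `u` that of `π̃`. -/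
noncomputable def chenDelta (a u : ℕ → ℝ) : ℝ≥0∞ :=
  ⨆ (x : ℕ) (_ : 1 ≤ x), (∑ y ∈ range x, ENNReal.ofReal (a y)) *
    ∑' z : ℕ, if x ≤ z then ENNReal.ofReal (u z) else 0

section GeometricDecay

variable {u : ℕ → ℝ} {θ : ℝ} {N : ℕ}

theorem le_pow_mul_of_succ_le_mul (hθ0 : 0 ≤ θ) (hstep : ∀ n ≥ N, u (n + 1) ≤ θ * u n)
    {x : ℕ} (hx : N ≤ x) (m : ℕ) : u (x + m) ≤ θ ^ m * u x := by
  induction m with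
  | zero => simp
  | succ m ih =>
    calc u (x + m + 1) ≤ θ * u (x + m) := hstep _ (hx.trans (Nat.le_add_right x m))
      _ ≤ θ * (θ ^ m * u x) := mul_le_mul_of_nonneg_left ih hθ0
      _ = θ ^ (m + 1) * u x := by ring

theorem tsum_tail_le_of_succ_le_mul (hu : ∀ n, 0 ≤ u n) (hθ0 : 0 ≤ θ) (hθ1 : θ < 1)
    (hstep : ∀ n ≥ N, u (n + 1) ≤ θ * u n) {x : ℕ} (hx : N ≤ x) :
    (∑' z : ℕ, if x ≤ z then ENNReal.ofReal (u z) else 0) ≤ ENNReal.ofReal (u x / (1 - θ)) := by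
  have hhead : ∑ z ∈ range x, (if x ≤ z then ENNReal.ofReal (u z) else 0) = 0 :=
    sum_eq_zero fun z hz => if_neg (not_le.2 (mem_range.1 hz))
  rw [← ENNReal.summable.sum_add_tsum_nat_add' (k := x), hhead, zero_add]
  calc ∑' m : ℕ, (if x ≤ m + x then ENNReal.ofReal (u (m + x)) else 0)
      ≤ ∑' m : ℕ, ENNReal.ofReal (u x) * ENNReal.ofReal θ ^ m := by
        refine ENNReal.tsum_le_tsum fun m => ?_
        rw [if_pos (Nat.le_add_left x m), ← ENNReal.ofReal_pow hθ0, ← ENNReal.ofReal_mul (hu x),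
          mul_comm, add_comm]
        exact ENNReal.ofReal_le_ofReal (le_pow_mul_of_succ_le_mul hθ0 hstep hx m)
    _ = ENNReal.ofReal (u x / (1 - θ)) := by
        rw [ENNReal.tsum_mul_left, ENNReal.tsum_geometric, ← ENNReal.ofReal_one,
          ← ENNReal.ofReal_sub _ hθ0, ← ENNReal.ofReal_inv_of_pos (by linarith),
          ← ENNReal.ofReal_mul (hu x), div_eq_mul_inv]

theorem sum_range_succ_inv_le_of_succ_le_mul (hu : ∀ n, 0 < u n) (hθ0 : 0 ≤ θ) (hθ1 : θ < 1)
    (hstep : ∀ n ≥ N, u (n + 1) ≤ θ * u n) {x : ℕ} (hx : N ≤ x) :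
    ∑ y ∈ range (x + 1), (u y)⁻¹ ≤ ∑ y ∈ range N, (u y)⁻¹ + (u x)⁻¹ / (1 - θ) := by
  have h1θ : 0 < 1 - θ := by linarith
  induction x, hx using Nat.le_induction with
  | base =>
    rw [sum_range_succ]
    gcongr
    exact le_div_self (inv_nonneg.2 (hu N).le) h1θ (by linarith)
  | succ x hx ih =>
    have hinv : (u x)⁻¹ ≤ θ * (u (x + 1))⁻¹ := by
      rw [← div_eq_mul_inv, le_div_iff₀ (hu _), ← div_eq_inv_mul, div_le_iff₀ (hu _)]
      exact hstep x hx
    rw [sum_range_succ]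
    calc ∑ y ∈ range (x + 1), (u y)⁻¹ + (u (x + 1))⁻¹
        ≤ ∑ y ∈ range N, (u y)⁻¹ + θ * (u (x + 1))⁻¹ / (1 - θ) + (u (x + 1))⁻¹ := by
          gcongr
          exact ih.trans (by gcongr)
      _ = ∑ y ∈ range N, (u y)⁻¹ + (u (x + 1))⁻¹ / (1 - θ) := by
          field_simp
          ring

theorem sum_mul_div_one_sub_le_of_succ_le_mul {a : ℕ → ℝ} {c : ℝ} (hu : ∀ n, 0 < u n)
    (hθ0 : 0 ≤ θ) (hθ1 : θ < 1) (hstep : ∀ n ≥ N, u (n + 1) ≤ θ * u n)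
    (hac : ∀ n, a n * u (n + 1) ≤ c) (hc : 0 ≤ c) {x : ℕ} (hx : N ≤ x) :
    (∑ y ∈ range x, a y) * (u x / (1 - θ)) ≤
      c * ((∑ y ∈ range N, (u y)⁻¹) * u N + (1 - θ)⁻¹) / (1 - θ) := by
  set S := ∑ y ∈ range N, (u y)⁻¹
  have h1θ : 0 < 1 - θ := by linarith
  have hux : u x ≤ u N := by
    have hdecay := le_pow_mul_of_succ_le_mul hθ0 hstep le_rfl (x - N)
    rw [Nat.add_sub_cancel' hx] at hdecay
    exact hdecay.trans (mul_le_of_le_one_left (hu N).le (pow_le_one₀ hθ0 hθ1.le))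
  have hA : ∑ y ∈ range x, a y ≤ c * (S + (u x)⁻¹ / (1 - θ)) :=
    calc ∑ y ∈ range x, a y ≤ ∑ y ∈ range x, c * (u (y + 1))⁻¹ :=
          sum_le_sum fun y _ => (le_mul_inv_iff₀ (hu _)).2 (hac y)
      _ ≤ c * ∑ y ∈ range (x + 1), (u y)⁻¹ := by
          rw [← mul_sum, sum_range_succ' _ x]
          gcongr
          exact le_add_of_nonneg_right (inv_nonneg.2 (hu 0).le)
      _ ≤ c * (S + (u x)⁻¹ / (1 - θ)) := by
          gcongr
          exact sum_range_succ_inv_le_of_succ_le_mul hu hθ0 hθ1 hstep hx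
  calc (∑ y ∈ range x, a y) * (u x / (1 - θ))
      ≤ c * (S + (u x)⁻¹ / (1 - θ)) * (u x / (1 - θ)) := by
        gcongr
        exact div_nonneg (hu x).le h1θ.le
    _ = c * (S * u x + (1 - θ)⁻¹) / (1 - θ) := by
        field_simp [(hu x).ne']
    _ ≤ c * (S * u N + (1 - θ)⁻¹) / (1 - θ) := by
        gcongr
        exact sum_nonneg fun y _ => inv_nonneg.2 (hu y).le

theorem chenDelta_lt_top_of_succ_le_mul {a : ℕ → ℝ} {c : ℝ} (hu : ∀ n, 0 < u n)
    (ha : ∀ n, 0 ≤ a n) (hθ0 : 0 ≤ θ) (hθ1 : θ < 1) (hstep : ∀ n ≥ N, u (n + 1) ≤ θ * u n)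
    (hac : ∀ n, a n * u (n + 1) ≤ c) : chenDelta a u < ⊤ := by
  have hc : 0 ≤ c := (mul_nonneg (ha 0) (hu 1).le).trans (hac 0)
  have hsum : Summable u := by
    refine summable_of_ratio_norm_eventually_le hθ1 (eventually_atTop.2 ⟨N, fun n hn => ?_⟩)
    simpa only [Real.norm_of_nonneg (hu _).le] using hstep n hn
  have hT : ∑' z : ℕ, ENNReal.ofReal (u z) < ⊤ := by
    rw [← ENNReal.ofReal_tsum_of_nonneg (fun n => (hu n).le) hsum]
    exact ENNReal.ofReal_lt_top
  set K := c * ((∑ y ∈ range N, (u y)⁻¹) * u N + (1 - θ)⁻¹) / (1 - θ)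
  refine (iSup₂_le fun x _ => ?_).trans_lt <| max_lt
    (ENNReal.mul_lt_top (ENNReal.ofReal_lt_top (r := ∑ y ∈ range N, a y)) hT)
    (ENNReal.ofReal_lt_top (r := K))
  rw [← ENNReal.ofReal_sum_of_nonneg fun y _ => ha y]
  rcases le_or_gt N x with hx | hx
  · refine le_max_of_le_right ?_
    calc ENNReal.ofReal (∑ y ∈ range x, a y) *
          ∑' z : ℕ, (if x ≤ z then ENNReal.ofReal (u z) else 0)
        ≤ ENNReal.ofReal (∑ y ∈ range x, a y) * ENNReal.ofReal (u x / (1 - θ)) := by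
          gcongr
          exact tsum_tail_le_of_succ_le_mul (fun n => (hu n).le) hθ0 hθ1 hstep hx
      _ ≤ ENNReal.ofReal K := by
          rw [← ENNReal.ofReal_mul (sum_nonneg fun y _ => ha y)]
          exact ENNReal.ofReal_le_ofReal
            (sum_mul_div_one_sub_le_of_succ_le_mul hu hθ0 hθ1 hstep hac hc hx)
  · refine le_max_of_le_left (mul_le_mul' (ENNReal.ofReal_le_ofReal ?_) ?_)
    · exact sum_le_sum_of_subset_of_nonneg (range_subset_range.2 hx.le) fun y _ _ => ha y
    · exact ENNReal.tsum_le_tsum fun z => by split_ifs <;> simp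

end GeometricDecay

theorem chenDelta_lt_top_of_tendsto_ratio {a u : ℕ → ℝ} {r : ℝ} (hu : ∀ n, 0 < u n)
    (ha : ∀ n, 0 ≤ a n) (hr : Tendsto (fun n => u (n + 1) / u n) atTop (𝓝 r)) (hr1 : r < 1)
    (hac : BddAbove (Set.range fun n => a n * u (n + 1))) : chenDelta a u < ⊤ := by
  obtain ⟨θ, hrθ, hθ1⟩ := exists_between hr1
  have hr0 : 0 ≤ r := ge_of_tendsto' hr fun n => (div_pos (hu _) (hu n)).le
  obtain ⟨N, hN⟩ := eventually_atTop.1 (hr.eventually_lt_const hrθ)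
  obtain ⟨c, hc⟩ := hac
  exact chenDelta_lt_top_of_succ_le_mul hu ha (hr0.trans hrθ.le) hθ1
    (fun n hn => ((div_lt_iff₀ (hu n)).1 (hN n hn)).le) (fun n => hc ⟨n, rfl⟩)

theorem stmt5_general (p q : ℕ → ℝ) (hp0 : p 0 = 1)
    (hp : ∀ x ≥ 1, 0 < p x ∧ p x < 1)
    (hq : ∀ x ≥ 1, 0 < q x ∧ q x < 1)
    (πt : ℕ → ℝ)
    (hπt : ∀ x, πt x = ∏ k ∈ Finset.Icc 1 x, p (k - 1) / q k)
    (pl ql : ℝ)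
    (hpl : Tendsto p atTop (nhds pl))
    (hql : Tendsto q atTop (nhds ql))
    (hlt : pl < ql) :
    (⨆ (x : ℕ) (_ : 1 ≤ x),
        (∑ y ∈ Finset.range x, ENNReal.ofReal ((πt y * p y)⁻¹)) *
          ∑' z : ℕ, if x ≤ z then ENNReal.ofReal (πt z) else 0) < ⊤ := by
  have hppos : ∀ x, 0 < p x
    | 0 => hp0 ▸ one_pos
    | x + 1 => (hp (x + 1) x.succ_pos).1
  have hqpos : ∀ x, 0 < q (x + 1) := fun x => (hq (x + 1) x.succ_pos).1
  have hπpos : ∀ x, 0 < πt x := fun x => by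
    rw [hπt]
    refine prod_pos fun k hk => div_pos (hppos _) ?_
    obtain ⟨j, rfl⟩ := Nat.exists_eq_add_of_le' (mem_Icc.1 hk).1
    exact hqpos j
  have hπsucc : ∀ x, πt (x + 1) = πt x * (p x / q (x + 1)) := fun x => by
    rw [hπt, hπt, prod_Icc_succ_top (Nat.le_add_left 1 x), Nat.add_sub_cancel]
  have hql0 : 0 < ql := (ge_of_tendsto' hpl fun x => (hppos x).le).trans_lt hlt
  have hqsucc : Tendsto (fun x => q (x + 1)) atTop (𝓝 ql) := hql.comp (tendsto_add_atTop_nat 1)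
  refine chenDelta_lt_top_of_tendsto_ratio hπpos (r := pl / ql)
    (fun y => inv_nonneg.2 (mul_pos (hπpos y) (hppos y)).le) ?_ ((div_lt_one hql0).2 hlt) ?_
  · simp_rw [hπsucc, mul_div_cancel_left₀ _ (hπpos _).ne']
    exact hpl.div hqsucc hql0.ne'
  · have hinv : ∀ x, (πt x * p x)⁻¹ * πt (x + 1) = (q (x + 1))⁻¹ := fun x => by
      rw [hπsucc]
      field_simp [(hπpos x).ne', (hppos x).ne', (hqpos x).ne']
    simp_rw [hinv]
    exact (hqsucc.inv₀ hql0.ne').bddAbove_range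

/-- For a birth and death chain with `p₀ = 1`, `pₓ + qₓ = 1`, reversible measure
`π̃(x) = ∏_{k=1}^x p_{k-1}/q_k`, if `pₓ → p`, `qₓ → q` with `p < q`, then Chen's constant
`δ := sup_{x ≥ 1} (∑_{y=0}^{x-1} [π̃(y) p_y]⁻¹) · (∑_{z=x}^∞ π̃(z))` is finite. -/
theorem stmt5 (p q : ℕ → ℝ) (hp0 : p 0 = 1)
    (hp : ∀ x ≥ 1, 0 < p x ∧ p x < 1)
    (hq : ∀ x ≥ 1, 0 < q x ∧ q x < 1)
    (hpq : ∀ x ≥ 1, p x + q x = 1)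
    (πt : ℕ → ℝ)
    (hπt : ∀ x, πt x = ∏ k ∈ Finset.Icc 1 x, p (k - 1) / q k)
    (pl ql : ℝ)
    (hpl : Tendsto p atTop (nhds pl))
    (hql : Tendsto q atTop (nhds ql))
    (hlt : pl < ql) :
    (⨆ (x : ℕ) (_ : 1 ≤ x),
        (∑ y ∈ Finset.range x, ENNReal.ofReal ((πt y * p y)⁻¹)) *
          ∑' z : ℕ, if x ≤ z then ENNReal.ofReal (πt z) else 0) < ⊤ :=
  stmt5_general p q hp0 hp hq πt hπt pl ql hpl hql hlt
end

section
/- Let {X_n} be the birth and death chain on ℤ₊ with p(0,1) = 1, p(x,x+1) = p_x ∈ (0,1), p(x,x−1) = q_x = 1 − p_x for x ≥ 1, and p(x,y) = 0 for |x−y| ≠ 1. Suppose lim_{x→∞} p_x = p, lim_{x→∞} q_x = q with p < q. Then the chain is positive recurrent with invariant probability measure π(x) = Z^{−1} ∏_{k=1}^{x} p_{k−1}/q_k (Z the normalizing constant), and it has the spectral gap property: λ₁ := sup{⟨Pf,f⟩_π : f ∈ L²(π), ∑_x f(x)π(x) = 0, ||f||_π = 1} < 1. -/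
open Filter Finset

/-!
Detailed balance `π x * p x = π (x + 1) * q (x + 1)` holds for the product weights, and the
edge weights `w k = π k * p k` have ratios `w (k + 1) / w k = p (k + 1) / q (k + 1) → pl / ql < 1`,
so they decay geometrically; since `π (x + 1) = w x + w (x + 1)`, so does `π`, which gives
positive recurrence.

For the spectral gap, summation by parts gives `‖f‖² - ⟨Pf, f⟩ = ∑ w k (f (k + 1) - f k) ^ 2`.
Writing `f x - f 0` as a sum of increments along `0, 1, …, x` and applying Cauchy–Schwarz with
geometric weights (a discrete Hardy inequality) bounds `∑ π (f - f 0) ^ 2` by a constant times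
this Dirichlet form; for mean-zero `f` with `‖f‖ = 1` the left side is `1 + f 0 ^ 2 ≥ 1`.
-/

theorem hasSum_of_succ_eq_add {G : Type*} [AddCommGroup G] [TopologicalSpace G]
    [IsTopologicalAddGroup G] {a b c : ℕ → G} {B C : G} (hb : HasSum b B) (hc : HasSum c C)
    (h0 : a 0 = b 0) (hsucc : ∀ k, a (k + 1) = b (k + 1) + c k) : HasSum a (B + C) := by
  have hshift : HasSum (fun k => a (k + 1)) (B - b 0 + C) := by
    simpa only [hsucc, range_one, sum_singleton] using ((hasSum_nat_add_iff' 1).2 hb).add hc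
  simpa only [h0, sub_add_eq_add_sub, add_sub_cancel] using hshift.zero_add

theorem summable_of_succ_eq_add {a b c : ℕ → ℝ} (hb : ∀ k, 0 ≤ b k) (hc : ∀ k, 0 ≤ c k)
    (h0 : a 0 = b 0) (hsucc : ∀ k, a (k + 1) = b (k + 1) + c k) (ha : Summable a) :
    Summable b ∧ Summable c := by
  have ha' : Summable fun k => a (k + 1) := (summable_nat_add_iff 1).2 ha
  refine ⟨.of_nonneg_of_le hb (fun k => ?_) ha, .of_nonneg_of_le hc (fun k => ?_) ha'⟩
  · cases k with
    | zero => exact h0.ge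
    | succ k => linarith [hsucc k, hc k]
  · linarith [hsucc k, hb (k + 1)]

theorem sum_range_pow_le {s : ℝ} (hs0 : 0 ≤ s) (hs1 : s < 1) (n : ℕ) :
    ∑ i ∈ range n, s ^ i ≤ (1 - s)⁻¹ :=
  (tsum_geometric_of_lt_one hs0 hs1) ▸
    (summable_geometric_of_lt_one hs0 hs1).sum_le_tsum _ (fun i _ => pow_nonneg hs0 i)

theorem exists_le_mul_pow_mul_of_eventually_le {u : ℕ → ℝ} {θ : ℝ} (hθ : 0 < θ)
    (hu : ∀ n, 0 < u n) (h : ∀ᶠ n in atTop, u (n + 1) ≤ θ * u n) :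
    ∃ C > 0, ∀ k x, k ≤ x → u x ≤ C * θ ^ (x - k) * u k := by
  obtain ⟨N, hN⟩ := eventually_atTop.1 h
  set φ : ℕ → ℝ := fun n => u n / θ ^ n
  have hφ : ∀ n, 0 < φ n := fun n => div_pos (hu n) (pow_pos hθ n)
  have hanti : ∀ k x, N ≤ k → k ≤ x → φ x ≤ φ k := by
    intro k x hk hkx
    induction x, hkx using Nat.le_induction with
    | base => exact le_rfl
    | succ x hkx ih =>
      calc u (x + 1) / θ ^ (x + 1) ≤ θ * u x / θ ^ (x + 1) := by gcongr; exact hN x (by omega)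
        _ = u x / θ ^ x := by rw [pow_succ]; field_simp
        _ ≤ φ k := ih
  obtain ⟨a, -, ha⟩ := (range (N + 1)).exists_max_image φ nonempty_range_add_one
  obtain ⟨b, -, hb⟩ := (range (N + 1)).exists_min_image φ nonempty_range_add_one
  have hbdd : ∀ x, φ x ≤ φ a := fun x => by
    rcases le_total x N with hx | hx
    · exact ha x (mem_range.2 (by omega))
    · exact (hanti N x le_rfl hx).trans (ha N (by simp))
  set C := max 1 (φ a / φ b)
  have hφC : ∀ k x, k ≤ x → φ x ≤ C * φ k := by
    intro k x hkx
    rcases le_total N k with hk | hk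
    · exact (hanti k x hk hkx).trans (le_mul_of_one_le_left (hφ k).le (le_max_left _ _))
    · calc φ x ≤ φ a / φ b * φ b := by rw [div_mul_cancel₀ _ (hφ b).ne']; exact hbdd x
        _ ≤ C * φ k := mul_le_mul (le_max_right _ _) (hb k (mem_range.2 (by omega)))
            (hφ b).le (by positivity)
  refine ⟨C, lt_max_of_lt_left one_pos, fun k x hkx => ?_⟩
  calc u x = φ x * θ ^ x := (div_mul_cancel₀ _ (pow_pos hθ x).ne').symm
    _ ≤ C * φ k * θ ^ x := by gcongr; exact hφC k x hkx
    _ = C * θ ^ (x - k) * u k := by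
      rw [← pow_sub_mul_pow θ hkx]; simp only [φ]; field_simp

theorem exists_lt_one_eventually_le_mul {ι : Type*} {l : Filter ι} {p q : ι → ℝ} {a b : ℝ}
    (ha : 0 ≤ a) (hab : a < b) (hp : Tendsto p l (nhds a)) (hq : Tendsto q l (nhds b)) :
    ∃ θ, 0 < θ ∧ θ < 1 ∧ ∀ᶠ n in l, p n ≤ θ * q n := by
  have hb : 0 < b := ha.trans_lt hab
  obtain ⟨θ, hθa, hθ1⟩ := exists_between ((div_lt_one hb).2 hab)
  refine ⟨θ, (div_nonneg ha hb.le).trans_lt hθa, hθ1, ?_⟩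
  exact (hp.eventually_lt (hq.const_mul θ) ((div_lt_iff₀ hb).1 hθa)).mono fun n hn => hn.le

theorem sq_mul_le_of_le_mul_pow {π w g : ℕ → ℝ} {C s : ℝ} (hπ : ∀ x, 0 ≤ π x)
    (hw : ∀ k, 0 < w k) (hC : 0 ≤ C) (hs0 : 0 < s) (hs1 : s < 1) (hg0 : g 0 = 0) (x : ℕ)
    (hdom : ∀ k ≤ x, π (x + 1) ≤ C * (s ^ (x - k)) ^ 2 * w k) :
    g (x + 1) ^ 2 * π (x + 1) ≤
      C * (1 - s)⁻¹ * ∑ k ∈ range (x + 1), s ^ (x - k) * (w k * (g (k + 1) - g k) ^ 2) := by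
  have hgeom : ∑ k ∈ range (x + 1), s ^ (x - k) ≤ (1 - s)⁻¹ := by
    simpa only [Nat.add_sub_cancel] using
      (sum_range_reflect (s ^ ·) (x + 1)).trans_le (sum_range_pow_le hs0.le hs1 (x + 1))
  have hCS : g (x + 1) ^ 2 ≤ (∑ k ∈ range (x + 1), s ^ (x - k) * (w k * (g (k + 1) - g k) ^ 2)) *
      ∑ k ∈ range (x + 1), (s ^ (x - k) * w k)⁻¹ := by
    rw [← sub_zero (g (x + 1)), ← hg0, ← sum_range_sub]
    refine sum_sq_le_sum_mul_sum_of_sq_le_mul _ (fun k _ => ?_) (fun k _ => ?_) (fun k _ => ?_)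
    · have := hw k; positivity
    · have := hw k; positivity
    · have := (hw k).ne'; have := (pow_pos hs0 (x - k)).ne'; field_simp; rfl
  have hweight : π (x + 1) * ∑ k ∈ range (x + 1), (s ^ (x - k) * w k)⁻¹ ≤ C * (1 - s)⁻¹ := by
    rw [mul_sum]
    calc ∑ k ∈ range (x + 1), π (x + 1) * (s ^ (x - k) * w k)⁻¹
        ≤ ∑ k ∈ range (x + 1), C * s ^ (x - k) := by
          refine sum_le_sum fun k hk => ?_
          have := hw k
          rw [← div_eq_mul_inv, div_le_iff₀ (by positivity)]
          calc π (x + 1) ≤ C * (s ^ (x - k)) ^ 2 * w k :=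
                hdom k (by simpa [Nat.lt_succ_iff] using hk)
            _ = C * s ^ (x - k) * (s ^ (x - k) * w k) := by ring
      _ ≤ C * (1 - s)⁻¹ := by rw [← mul_sum]; exact mul_le_mul_of_nonneg_left hgeom hC
  have hsum_nonneg : 0 ≤ ∑ k ∈ range (x + 1), s ^ (x - k) * (w k * (g (k + 1) - g k) ^ 2) :=
    sum_nonneg fun k _ => by have := hw k; positivity
  calc g (x + 1) ^ 2 * π (x + 1)
      ≤ π (x + 1) * ((∑ k ∈ range (x + 1), s ^ (x - k) * (w k * (g (k + 1) - g k) ^ 2)) *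
        ∑ k ∈ range (x + 1), (s ^ (x - k) * w k)⁻¹) := by
        rw [mul_comm]; exact mul_le_mul_of_nonneg_left hCS (hπ _)
    _ = (∑ k ∈ range (x + 1), s ^ (x - k) * (w k * (g (k + 1) - g k) ^ 2)) *
        (π (x + 1) * ∑ k ∈ range (x + 1), (s ^ (x - k) * w k)⁻¹) := by ring
    _ ≤ _ := by rw [mul_comm (C * _)]; exact mul_le_mul_of_nonneg_left hweight hsum_nonneg

theorem tsum_sq_mul_le_of_le_mul_pow {π w g : ℕ → ℝ} {C s : ℝ} (hπ : ∀ x, 0 ≤ π x)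
    (hw : ∀ k, 0 < w k) (hC : 0 ≤ C) (hs0 : 0 < s) (hs1 : s < 1)
    (hdom : ∀ k x, k ≤ x → π (x + 1) ≤ C * (s ^ (x - k)) ^ 2 * w k) (hg0 : g 0 = 0)
    (hd : Summable fun k => w k * (g (k + 1) - g k) ^ 2) :
    ∑' x, g x ^ 2 * π x ≤ C * (1 - s)⁻¹ ^ 2 * ∑' k, w k * (g (k + 1) - g k) ^ 2 := by
  set d := fun k => w k * (g (k + 1) - g k) ^ 2
  have hd0 : ∀ k, 0 ≤ d k := fun k => by have := hw k; positivity
  refine Real.tsum_le_of_sum_range_le (fun x => mul_nonneg (sq_nonneg _) (hπ x)) fun n => ?_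
  calc ∑ x ∈ range n, g x ^ 2 * π x
      ≤ ∑ x ∈ range (n + 1), g x ^ 2 * π x :=
        sum_le_sum_of_subset_of_nonneg (range_subset_range.2 n.le_succ)
          fun x _ _ => mul_nonneg (sq_nonneg _) (hπ x)
    _ = ∑ x ∈ range n, g (x + 1) ^ 2 * π (x + 1) := by simp [sum_range_succ', hg0]
    _ ≤ ∑ x ∈ range n, C * (1 - s)⁻¹ * ∑ k ∈ range (x + 1), s ^ (x - k) * d k :=
        sum_le_sum fun x _ => sq_mul_le_of_le_mul_pow hπ hw hC hs0 hs1 hg0 x fun k hk => hdom k x hk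
    _ = C * (1 - s)⁻¹ * ∑ k ∈ range n, (∑ j ∈ range (n - k), s ^ j) * d k := by
        rw [← mul_sum, sum_range_diag_flip n (fun k j => s ^ j * d k)]; simp only [sum_mul]
    _ ≤ C * (1 - s)⁻¹ * ∑ k ∈ range n, (1 - s)⁻¹ * d k := by
        gcongr with k; exact hd0 k; exact sum_range_pow_le hs0.le hs1 _
    _ ≤ C * (1 - s)⁻¹ ^ 2 * ∑' k, d k := by
        rw [← mul_sum, sq, ← mul_assoc, ← mul_assoc]
        gcongr
        exact hd.sum_le_tsum _ fun k _ => hd0 k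

theorem tsum_sub_sq_mul {π f : ℕ → ℝ} (hπ : ∀ x, 0 ≤ π x) (hπs : Summable π)
    (hf : Summable fun x => f x ^ 2 * π x) (c : ℝ) :
    ∑' x, (f x - c) ^ 2 * π x =
      ∑' x, f x ^ 2 * π x - 2 * c * ∑' x, f x * π x + c ^ 2 * ∑' x, π x := by
  have hfπ : Summable fun x => f x * π x := by
    refine (hf.add hπs).of_norm_bounded fun x => ?_
    rw [norm_mul, Real.norm_eq_abs, Real.norm_eq_abs, abs_of_nonneg (hπ x)]
    have : |f x| ≤ f x ^ 2 + 1 := by nlinarith [sq_abs (f x), abs_nonneg (f x)]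
    nlinarith [hπ x]
  rw [← tsum_mul_left, ← tsum_mul_left, ← hf.tsum_sub (hfπ.mul_left _),
    ← (hf.sub (hfπ.mul_left _)).tsum_add (hπs.mul_left _)]
  exact tsum_congr fun x => by ring

def birthDeathKernel (p q : ℕ → ℝ) (x y : ℕ) : ℝ :=
  if y = x + 1 then p x else if y + 1 = x then q x else 0

section BirthDeath

variable {p q π : ℕ → ℝ}

theorem tsum_birthDeathKernel_zero_mul (f : ℕ → ℝ) :
    ∑' y, birthDeathKernel p q 0 y * f y = p 0 * f 1 := by
  rw [tsum_eq_single 1 fun y hy => by simp [birthDeathKernel, hy]]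
  simp [birthDeathKernel]

theorem tsum_birthDeathKernel_succ_mul (f : ℕ → ℝ) (x : ℕ) :
    ∑' y, birthDeathKernel p q (x + 1) y * f y = p (x + 1) * f (x + 2) + q (x + 1) * f x := by
  rw [tsum_eq_sum (s := {x + 2, x}) fun y hy => by
    simp only [mem_insert, mem_singleton, not_or] at hy
    simp [birthDeathKernel, hy.2, show y ≠ x + 1 + 1 from hy.1]]
  simp [birthDeathKernel, sum_pair (show x + 2 ≠ x by omega), show x ≠ x + 1 + 1 by omega]

theorem tsum_mul_birthDeathKernel_zero (g : ℕ → ℝ) :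
    ∑' x, g x * birthDeathKernel p q x 0 = g 1 * q 1 := by
  rw [tsum_eq_single 1 fun x hx => by simp [birthDeathKernel, Ne.symm hx]]
  simp [birthDeathKernel]

theorem tsum_mul_birthDeathKernel_succ (g : ℕ → ℝ) (y : ℕ) :
    ∑' x, g x * birthDeathKernel p q x (y + 1) = g y * p y + g (y + 2) * q (y + 2) := by
  rw [tsum_eq_sum (s := {y, y + 2}) fun x hx => by
    simp only [mem_insert, mem_singleton, not_or] at hx
    simp [birthDeathKernel, Ne.symm hx.1, show y + 1 + 1 ≠ x from Ne.symm hx.2]]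
  simp [birthDeathKernel, sum_pair (show y ≠ y + 2 by omega)]

theorem eq_mul_add_mul_of_detailedBalance (hpq : ∀ x ≥ 1, p x + q x = 1)
    (hdb : ∀ x, π x * p x = π (x + 1) * q (x + 1)) (k : ℕ) :
    π (k + 1) = π (k + 1) * p (k + 1) + π k * p k := by
  linear_combination π (k + 1) * (hpq (k + 1) k.succ_pos).symm - hdb k

theorem tsum_mul_birthDeathKernel (hp0 : p 0 = 1) (hpq : ∀ x ≥ 1, p x + q x = 1)
    (hdb : ∀ x, π x * p x = π (x + 1) * q (x + 1)) (y : ℕ) :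
    ∑' x, π x * birthDeathKernel p q x y = π y := by
  cases y with
  | zero => simpa [tsum_mul_birthDeathKernel_zero, hp0] using (hdb 0).symm
  | succ y =>
    rw [tsum_mul_birthDeathKernel_succ]
    linear_combination -eq_mul_add_mul_of_detailedBalance hpq hdb y - hdb (y + 1)

theorem tsum_birthDeathKernel_mul_mul_eq (hp0 : p 0 = 1) (hpq : ∀ x ≥ 1, p x + q x = 1)
    (hdb : ∀ x, π x * p x = π (x + 1) * q (x + 1)) (hw : ∀ k, 0 ≤ π k * p k) {f : ℕ → ℝ}
    (hf : Summable fun x => f x ^ 2 * π x) :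
    (Summable fun k => π k * p k * (f (k + 1) - f k) ^ 2) ∧
      ∑' x, (∑' y, birthDeathKernel p q x y * f y) * f x * π x =
        ∑' x, f x ^ 2 * π x - ∑' k, π k * p k * (f (k + 1) - f k) ^ 2 := by
  obtain ⟨hb, hc⟩ := summable_of_succ_eq_add (a := fun x => f x ^ 2 * π x)
    (fun k => mul_nonneg (sq_nonneg (f k)) (hw k))
    (fun k => mul_nonneg (sq_nonneg (f (k + 1))) (hw k)) (by simp [hp0])
    (fun k => by linear_combination f (k + 1) ^ 2 * eq_mul_add_mul_of_detailedBalance hpq hdb k) hf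
  have hd : Summable fun k => π k * p k * (f (k + 1) - f k) ^ 2 := by
    refine .of_nonneg_of_le (fun k => mul_nonneg (hw k) (sq_nonneg _)) (fun k => ?_)
      ((hb.mul_left 2).add (hc.mul_left 2))
    nlinarith [mul_nonneg (hw k) (sq_nonneg (f (k + 1) + f k))]
  have he : Summable fun k => f k * f (k + 1) * (π k * p k) :=
    (((hb.add hc).sub hd).div_const 2).congr fun k => by ring
  have hnorm := hasSum_of_succ_eq_add hb.hasSum hc.hasSum (a := fun x => f x ^ 2 * π x)
    (by simp [hp0])
    (fun k => by linear_combination f (k + 1) ^ 2 * eq_mul_add_mul_of_detailedBalance hpq hdb k)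
  have hform := hasSum_of_succ_eq_add he.hasSum he.hasSum
    (a := fun x => (∑' y, birthDeathKernel p q x y * f y) * f x * π x)
    (by simp only [tsum_birthDeathKernel_zero_mul, hp0]; ring)
    (fun k => by
      simp only [tsum_birthDeathKernel_succ_mul]
      linear_combination -(f k * f (k + 1)) * hdb k)
  have hdirichlet : ∑' k, π k * p k * (f (k + 1) - f k) ^ 2 =
      (∑' k, f k ^ 2 * (π k * p k)) + (∑' k, f (k + 1) ^ 2 * (π k * p k)) -
        2 * ∑' k, f k * f (k + 1) * (π k * p k) := by
    rw [← tsum_mul_left, ← hb.tsum_add hc, ← (hb.add hc).tsum_sub (he.mul_left 2)]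
    exact tsum_congr fun k => by ring
  refine ⟨hd, ?_⟩
  rw [hform.tsum_eq, hnorm.tsum_eq, hdirichlet]
  ring

theorem exists_le_mul_pow_of_detailedBalance (hpq : ∀ x ≥ 1, p x + q x = 1)
    (hdb : ∀ x, π x * p x = π (x + 1) * q (x + 1)) (hπ : ∀ x, 0 < π x) (hp : ∀ x, 0 < p x)
    {θ : ℝ} (hθ0 : 0 < θ) (hθ1 : θ ≤ 1) (h : ∀ᶠ n in atTop, p n ≤ θ * q n) :
    ∃ C > 0, ∀ k x, k ≤ x → π (x + 1) ≤ C * θ ^ (x - k) * (π k * p k) := by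
  obtain ⟨C, hC, hCw⟩ := exists_le_mul_pow_mul_of_eventually_le hθ0
    (fun k => mul_pos (hπ k) (hp k)) <| ((tendsto_add_atTop_nat 1).eventually h).mono fun n hn =>
      calc π (n + 1) * p (n + 1) ≤ π (n + 1) * (θ * q (n + 1)) := by gcongr; exact (hπ _).le
        _ = θ * (π n * p n) := by rw [hdb n]; ring
  refine ⟨2 * C, by positivity, fun k x hkx => ?_⟩
  have hnext : π (x + 1) * p (x + 1) ≤ C * θ ^ (x - k) * (π k * p k) :=
    calc π (x + 1) * p (x + 1) ≤ C * θ ^ (x - k) * θ * (π k * p k) := by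
          simpa only [Nat.sub_add_comm hkx, pow_succ, mul_assoc] using hCw k (x + 1) (by omega)
      _ ≤ C * θ ^ (x - k) * (π k * p k) :=
          mul_le_mul_of_nonneg_right (mul_le_of_le_one_right (by positivity) hθ1)
            (mul_pos (hπ k) (hp k)).le
  rw [eq_mul_add_mul_of_detailedBalance hpq hdb x]
  linarith [hCw k x hkx, hnext]

theorem summable_of_detailedBalance (hpq : ∀ x ≥ 1, p x + q x = 1)
    (hdb : ∀ x, π x * p x = π (x + 1) * q (x + 1)) (hπ : ∀ x, 0 < π x) (hp : ∀ x, 0 < p x)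
    {θ : ℝ} (hθ0 : 0 < θ) (hθ1 : θ < 1) (h : ∀ᶠ n in atTop, p n ≤ θ * q n) : Summable π := by
  obtain ⟨C, -, hC⟩ := exists_le_mul_pow_of_detailedBalance hpq hdb hπ hp hθ0 hθ1.le h
  refine (summable_nat_add_iff 1).1 <| .of_nonneg_of_le (fun x => (hπ _).le) (fun x => ?_)
    ((summable_geometric_of_lt_one hθ0.le hθ1).mul_left (C * (π 0 * p 0)))
  linarith [hC 0 x x.zero_le, show C * θ ^ (x - 0) * (π 0 * p 0) = C * (π 0 * p 0) * θ ^ x by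
    rw [Nat.sub_zero]; ring]

theorem exists_forall_tsum_birthDeathKernel_mul_mul_le (hp0 : p 0 = 1)
    (hpq : ∀ x ≥ 1, p x + q x = 1) (hdb : ∀ x, π x * p x = π (x + 1) * q (x + 1))
    (hπ : ∀ x, 0 < π x) (hπ1 : HasSum π 1) (hp : ∀ x, 0 < p x) {θ : ℝ} (hθ0 : 0 < θ)
    (hθ1 : θ < 1) (h : ∀ᶠ n in atTop, p n ≤ θ * q n) :
    ∃ b < 1, ∀ f : ℕ → ℝ, (Summable fun x => f x ^ 2 * π x) → ∑' x, f x * π x = 0 →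
      ∑' x, f x ^ 2 * π x = 1 → ∑' x, (∑' y, birthDeathKernel p q x y * f y) * f x * π x ≤ b := by
  obtain ⟨C, hC, hdom⟩ := exists_le_mul_pow_of_detailedBalance hpq hdb hπ hp hθ0 hθ1.le h
  have hs0 : 0 < √θ := Real.sqrt_pos.2 hθ0
  have hs1 : √θ < 1 := (Real.sqrt_lt' one_pos).2 (by simpa using hθ1)
  set K := C * (1 - √θ)⁻¹ ^ 2
  have hK : 0 < K := mul_pos hC (pow_pos (inv_pos.2 (sub_pos.2 hs1)) 2)
  refine ⟨1 - K⁻¹, sub_lt_self 1 (inv_pos.2 hK), fun f hf hmean hnorm => ?_⟩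
  obtain ⟨hd, hr⟩ := tsum_birthDeathKernel_mul_mul_eq hp0 hpq hdb
    (fun k => (mul_pos (hπ k) (hp k)).le) hf
  have hpoincare : 1 ≤ K * ∑' k, π k * p k * (f (k + 1) - f k) ^ 2 :=
    calc 1 ≤ 1 + f 0 ^ 2 := le_add_of_nonneg_right (sq_nonneg _)
      _ = ∑' x, (f x - f 0) ^ 2 * π x := by
        rw [tsum_sub_sq_mul (fun x => (hπ x).le) hπ1.summable hf, hnorm, hmean, hπ1.tsum_eq]
        ring
      _ ≤ K * ∑' k, π k * p k * ((f (k + 1) - f 0) - (f k - f 0)) ^ 2 :=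
        tsum_sq_mul_le_of_le_mul_pow (g := fun x => f x - f 0) (fun x => (hπ x).le)
          (fun k => mul_pos (hπ k) (hp k)) hC.le hs0 hs1
          (fun k x hkx => by
            rw [← pow_mul, mul_comm (x - k) 2, pow_mul, Real.sq_sqrt hθ0.le]; exact hdom k x hkx)
          (sub_self _) (by simpa only [sub_sub_sub_cancel_right] using hd)
      _ = K * ∑' k, π k * p k * (f (k + 1) - f k) ^ 2 := by
        simp only [sub_sub_sub_cancel_right]
  rw [hr, hnorm]
  linarith [(inv_le_iff_one_le_mul₀' hK).2 hpoincare]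

end BirthDeath

theorem prod_Icc_mul_eq_prod_Icc_mul {p q : ℕ → ℝ} {x : ℕ} (hq : q (x + 1) ≠ 0) :
    (∏ k ∈ Icc 1 x, p (k - 1) / q k) * p x =
      (∏ k ∈ Icc 1 (x + 1), p (k - 1) / q k) * q (x + 1) := by
  rw [prod_Icc_succ_top (by omega), Nat.add_sub_cancel]
  field_simp

/-- For the birth and death chain with `p(0,1) = 1`, `p(x,x+1) = pₓ`,
`p(x,x-1) = qₓ = 1 - pₓ`, if `pₓ → p`, `qₓ → q` with `p < q`, then the chain is positive
recurrent with invariant probability measure `π(x) = Z⁻¹ ∏_{k=1}^x p_{k-1}/q_k`, and it has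
the spectral gap property: `λ₁ := sup {⟨Pf,f⟩_π : ∑ₓ f(x)π(x) = 0, ‖f‖_π = 1} < 1`. -/
theorem stmt6 (p q : ℕ → ℝ) (hp0 : p 0 = 1)
    (hp : ∀ x ≥ 1, 0 < p x ∧ p x < 1)
    (hq : ∀ x ≥ 1, 0 < q x ∧ q x < 1)
    (hpq : ∀ x ≥ 1, p x + q x = 1)
    (pm : ℕ → ℕ → ℝ)
    (hpm : ∀ x y, pm x y = if y = x + 1 then p x else if y + 1 = x then q x else 0)
    (πt : ℕ → ℝ)
    (hπt : ∀ x, πt x = ∏ k ∈ Finset.Icc 1 x, p (k - 1) / q k)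
    (π : ℕ → ℝ) (hπ : ∀ x, π x = πt x / ∑' y, πt y)
    (pl ql : ℝ)
    (hpl : Tendsto p atTop (nhds pl))
    (hql : Tendsto q atTop (nhds ql))
    (hlt : pl < ql) :
    Summable πt ∧
    (∑' x, π x) = 1 ∧
    (∀ y, ∑' x, π x * pm x y = π y) ∧
    sSup {r : ℝ | ∃ f : ℕ → ℝ, (Summable fun x => f x ^ 2 * π x) ∧
        (∑' x, f x * π x) = 0 ∧ (∑' x, f x ^ 2 * π x) = 1 ∧
        r = ∑' x, (∑' y, pm x y * f y) * f x * π x} < 1 := by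
  obtain rfl : pm = birthDeathKernel p q := funext fun x => funext (hpm x)
  have hppos : ∀ x, 0 < p x := fun x =>
    x.eq_zero_or_pos.elim (fun h => by simp [h, hp0]) fun h => (hp x h).1
  have hπtpos : ∀ x, 0 < πt x := fun x =>
    hπt x ▸ prod_pos fun k hk => div_pos (hppos _) (hq k (mem_Icc.1 hk).1).1
  have hdbt : ∀ x, πt x * p x = πt (x + 1) * q (x + 1) := fun x => by
    rw [hπt, hπt]; exact prod_Icc_mul_eq_prod_Icc_mul (hq (x + 1) (by omega)).1.ne'
  obtain ⟨θ, hθ0, hθ1, hθ⟩ := exists_lt_one_eventually_le_mul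
    (ge_of_tendsto' hpl fun x => (hppos x).le) hlt hpl hql
  have hsum : Summable πt := summable_of_detailedBalance hpq hdbt hπtpos hppos hθ0 hθ1 hθ
  have hZ : 0 < ∑' y, πt y := hsum.tsum_pos (fun y => (hπtpos y).le) 0 (hπtpos 0)
  have hπpos : ∀ x, 0 < π x := fun x => hπ x ▸ div_pos (hπtpos x) hZ
  have hdb : ∀ x, π x * p x = π (x + 1) * q (x + 1) := fun x => by
    rw [hπ, hπ, div_mul_eq_mul_div, div_mul_eq_mul_div, hdbt]
  have hπ1 : HasSum π 1 := by
    simpa only [← hπ, div_self hZ.ne'] using hsum.hasSum.div_const (∑' y, πt y)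
  obtain ⟨b, hb1, hb⟩ := exists_forall_tsum_birthDeathKernel_mul_mul_le hp0 hpq hdb hπpos hπ1
    hppos hθ0 hθ1 hθ
  refine ⟨hsum, hπ1.tsum_eq, tsum_mul_birthDeathKernel hp0 hpq hdb, ?_⟩
  refine (Real.sSup_le ?_ (le_max_right b 0)).trans_lt (max_lt hb1 one_pos)
  rintro r ⟨f, hf, hmean, hnorm, rfl⟩
  exact (hb f hf hmean hnorm).trans (le_max_left _ _)
end

section
/- Let α > 0 and let (c_x)_{x≥1} be a sequence with 0 < c_x < 1/2 and liminf_{x→∞} c_x x^{α} > 0. Set p_x = 1/2 − c_x, q_x = 1/2 + c_x, and π̃(x) = ∏_{k=1}^{x} p_{k−1}/q_k (with p_0 = 1). Then there exist constants c > 0, c̃ > 0 and K such that π̃(x) ≤ c̃ exp(−c x^{1−α}) for all x > K. -/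
open Filter

lemma stmt7_aux (t : ℝ) (h0 : 0 < t) (h1 : t < 1/2) :
    (1/2) / (1/2 + t) ≤ Real.exp (-t) := by
  have hpos : (0:ℝ) < 1/2 + t := by linarith
  have hfrac : (0:ℝ) < (1/2)/(1/2+t) := by positivity
  have hlog := Real.log_le_sub_one_of_pos hfrac
  have h3 : (1/2)/(1/2+t) - 1 ≤ -t := by
    rw [div_sub_one hpos.ne', div_le_iff₀ hpos]
    nlinarith
  have key : Real.log ((1/2)/(1/2+t)) ≤ -t := le_trans hlog h3
  calc (1/2)/(1/2+t) = Real.exp (Real.log ((1/2)/(1/2+t))) := (Real.exp_log hfrac).symm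
    _ ≤ Real.exp (-t) := Real.exp_le_exp.mpr key

/-- If `α > 0`, `0 < cₓ < 1/2`, `liminf cₓ xᵅ > 0`, `pₓ = 1/2 - cₓ`,
`qₓ = 1/2 + cₓ` (with `p₀ = 1`), and `π̃(x) = ∏_{k=1}^x p_{k-1}/q_k`, then there are constants
`c > 0`, `c̃ > 0` and `K` with `π̃(x) ≤ c̃ exp(-c x^{1-α})` for all `x > K`. -/
theorem stmt7 (α : ℝ) (hα : 0 < α) (c : ℕ → ℝ)
    (hc : ∀ x ≥ 1, 0 < c x ∧ c x < 1 / 2)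
    (hliminf : ∃ c₀ > 0, ∀ᶠ x : ℕ in atTop, c₀ ≤ c x * (x : ℝ) ^ α)
    (p q : ℕ → ℝ) (hp0 : p 0 = 1)
    (hp : ∀ x ≥ 1, p x = 1 / 2 - c x)
    (hq : ∀ x ≥ 1, q x = 1 / 2 + c x)
    (πt : ℕ → ℝ)
    (hπt : ∀ x, πt x = ∏ k ∈ Finset.Icc 1 x, p (k - 1) / q k) :
    ∃ c' > (0 : ℝ), ∃ ct > (0 : ℝ), ∃ K : ℕ, ∀ x > K,
      πt x ≤ ct * Real.exp (-c' * (x : ℝ) ^ (1 - α)) := by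
  obtain ⟨c₀, hc₀, hev⟩ := hliminf
  obtain ⟨N₀, hN₀⟩ := eventually_atTop.mp hev
  set N : ℕ := max N₀ 2 with hNdef
  have hN2 : 2 ≤ N := le_max_right _ _
  refine ⟨c₀, hc₀, 2 * Real.exp (c₀ * N), by positivity, N, ?_⟩
  intro x hx
  have hx2 : 2 ≤ x := le_trans hN2 hx.le
  have hx1R : (1:ℝ) ≤ (x:ℝ) := by exact_mod_cast le_trans (by norm_num) hx2
  have hx0R : (0:ℝ) < (x:ℝ) := lt_of_lt_of_le one_pos hx1R
  set g : ℕ → ℝ := fun k => if k = 1 then 2 else Real.exp (-c k) with hg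
  have hq_pos : ∀ k ≥ 1, 0 < q k := by
    intro k hk
    rw [hq k hk]
    linarith [(hc k hk).1]
  have hp_nonneg : ∀ k ≥ 1, 0 ≤ p (k-1) := by
    intro k hk
    rcases Nat.lt_or_ge k 2 with h | h
    · interval_cases k
      rw [show (1:ℕ) - 1 = 0 from rfl, hp0]; norm_num
    · have hkm1 : 1 ≤ k - 1 := by omega
      rw [hp (k-1) hkm1]
      linarith [(hc (k-1) hkm1).2]
  have hfac : ∀ k ∈ Finset.Icc 1 x, p (k-1) / q k ≤ g k := by
    intro k hk
    obtain ⟨hk1, hkx⟩ := Finset.mem_Icc.mp hk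
    rcases eq_or_lt_of_le hk1 with h1 | h2
    · subst h1
      simp only [hg, if_pos rfl]
      have hq1 := hq 1 le_rfl
      have hc1 := (hc 1 le_rfl).1
      rw [show (1:ℕ) - 1 = 0 from rfl, hp0, hq1, div_le_iff₀ (by linarith)]
      linarith
    · have hk2 : 2 ≤ k := h2
      have hkm1 : 1 ≤ k - 1 := by omega
      have hck := hc k hk1
      have hqk := hq k hk1
      have hne : k ≠ 1 := by omega
      simp only [hg, if_neg hne]
      have hple : p (k-1) ≤ 1/2 := by
        rw [hp (k-1) hkm1]; linarith [(hc (k-1) hkm1).1]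
      calc p (k-1) / q k ≤ (1/2) / q k := by
            gcongr
            exact (hq_pos k hk1).le
        _ = (1/2) / (1/2 + c k) := by rw [hqk]
        _ ≤ Real.exp (-c k) := stmt7_aux (c k) hck.1 hck.2
  have hfac_nonneg : ∀ k ∈ Finset.Icc 1 x, 0 ≤ p (k-1) / q k := by
    intro k hk
    obtain ⟨hk1, _⟩ := Finset.mem_Icc.mp hk
    exact div_nonneg (hp_nonneg k hk1) (hq_pos k hk1).le
  -- product bound
  have hprod : πt x ≤ ∏ k ∈ Finset.Icc 1 x, g k := by
    rw [hπt x]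
    exact Finset.prod_le_prod hfac_nonneg hfac
  -- split off first factor
  have hIcc : Finset.Icc 1 x = Finset.Ico 1 (x+1) := by
    rw [Finset.Ico_add_one_right_eq_Icc]
  have hsplit : ∏ k ∈ Finset.Icc 1 x, g k
      = 2 * ∏ k ∈ Finset.Ico 2 (x+1), Real.exp (-c k) := by
    rw [hIcc, Finset.prod_eq_prod_Ico_succ_bot (by omega : 1 < x + 1)]
    have h2' : ∀ k ∈ Finset.Ico 2 (x+1), g k = Real.exp (-c k) := by
      intro k hk
      obtain ⟨hk2, _⟩ := Finset.mem_Ico.mp hk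
      simp only [hg, if_neg (by omega : k ≠ 1)]
    rw [Finset.prod_congr rfl h2']
    simp [hg]
  -- sum bound
  have hsum1 : (x:ℝ) * (c₀ * (x:ℝ) ^ (-α)) - (N:ℝ) * (c₀ * (x:ℝ) ^ (-α))
      ≤ ∑ k ∈ Finset.Ico 2 (x+1), c k := by
    have hsub : Finset.Ico N (x+1) ⊆ Finset.Ico 2 (x+1) := by
      apply Finset.Ico_subset_Ico hN2 le_rfl
    have h1 : ∑ k ∈ Finset.Ico N (x+1), c k ≤ ∑ k ∈ Finset.Ico 2 (x+1), c k := by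
      apply Finset.sum_le_sum_of_subset_of_nonneg hsub
      intro k hk _
      obtain ⟨hk2, _⟩ := Finset.mem_Ico.mp hk
      exact (hc k (by omega)).1.le
    have h2 : ∑ k ∈ Finset.Ico N (x+1), (c₀ * (x:ℝ) ^ (-α))
        ≤ ∑ k ∈ Finset.Ico N (x+1), c k := by
      apply Finset.sum_le_sum
      intro k hk
      obtain ⟨hkN, hkx⟩ := Finset.mem_Ico.mp hk
      have hk1 : 1 ≤ k := by omega
      have hkR : (0:ℝ) < (k:ℝ) := by exact_mod_cast Nat.pos_of_ne_zero (by omega)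
      have hck := (hc k hk1).1
      have hcck : c₀ ≤ c k * (k:ℝ) ^ α := hN₀ k (le_trans (le_max_left _ _) hkN)
      have hklex : (k:ℝ) ^ α ≤ (x:ℝ) ^ α := by
        apply Real.rpow_le_rpow hkR.le ?_ hα.le
        exact_mod_cast (by omega : k ≤ x)
      have hxa_pos : (0:ℝ) < (x:ℝ) ^ α := Real.rpow_pos_of_pos hx0R α
      have : c₀ ≤ c k * (x:ℝ) ^ α := le_trans hcck (by nlinarith)
      rw [Real.rpow_neg hx0R.le, ← div_eq_mul_inv, div_le_iff₀ hxa_pos]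
      linarith
    have h3 : ∑ k ∈ Finset.Ico N (x+1), (c₀ * (x:ℝ) ^ (-α))
        = ((x + 1 - N : ℕ) : ℝ) * (c₀ * (x:ℝ) ^ (-α)) := by
      rw [Finset.sum_const, Nat.card_Ico, nsmul_eq_mul]
    have hcast : ((x + 1 - N : ℕ) : ℝ) = (x:ℝ) + 1 - (N:ℝ) := by
      have : N ≤ x + 1 := by omega
      push_cast [this]
      ring
    have hxna_pos : (0:ℝ) ≤ c₀ * (x:ℝ) ^ (-α) := by positivity
    nlinarith [h1, h2, h3.symm.trans_le h2, hcast]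
  have hx_pow : (x:ℝ) * (x:ℝ) ^ (-α) = (x:ℝ) ^ (1 - α) := by
    rw [sub_eq_add_neg, Real.rpow_add hx0R, Real.rpow_one]
  have hxna_le_one : (x:ℝ) ^ (-α) ≤ 1 :=
    Real.rpow_le_one_of_one_le_of_nonpos hx1R (by linarith)
  have hsum2 : c₀ * (x:ℝ) ^ (1 - α) - c₀ * (N:ℝ) ≤ ∑ k ∈ Finset.Ico 2 (x+1), c k := by
    have hN_nonneg : (0:ℝ) ≤ (N:ℝ) := Nat.cast_nonneg N
    have : (N:ℝ) * (c₀ * (x:ℝ) ^ (-α)) ≤ c₀ * (N:ℝ) := by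
      nlinarith [mul_nonneg (mul_nonneg hc₀.le hN_nonneg) (sub_nonneg.mpr hxna_le_one)]
    nlinarith [hsum1, hx_pow]
  -- final
  have hexp : ∏ k ∈ Finset.Ico 2 (x+1), Real.exp (-c k)
      = Real.exp (-∑ k ∈ Finset.Ico 2 (x+1), c k) := by
    rw [← Real.exp_sum, Finset.sum_neg_distrib]
  calc πt x ≤ ∏ k ∈ Finset.Icc 1 x, g k := hprod
    _ = 2 * ∏ k ∈ Finset.Ico 2 (x+1), Real.exp (-c k) := hsplit
    _ = 2 * Real.exp (-∑ k ∈ Finset.Ico 2 (x+1), c k) := by rw [hexp]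
    _ ≤ 2 * Real.exp (-(c₀ * (x:ℝ) ^ (1 - α) - c₀ * (N:ℝ))) := by
        gcongr
    _ = 2 * Real.exp (c₀ * N) * Real.exp (-c₀ * (x:ℝ) ^ (1 - α)) := by
        rw [mul_assoc, ← Real.exp_add]
        ring_nf
end

section
/- Let α > 1 and let (c_x)_{x≥1} be a sequence with 0 < c_x < 1/2 and 0 < liminf_{x→∞} c_x x^{α} ≤ limsup_{x→∞} c_x x^{α} < ∞. Set p_x = 1/2 − c_x, q_x = 1/2 + c_x, and π̃(0) = 1, π̃(x) = ∏_{k=1}^{x} p_{k−1}/q_k for x ≥ 1 (with p_0 = 1). Then ∑_{x=0}^{∞} π̃(x) = ∞; in particular the birth and death chain with these transition probabilities is not positive recurrent. -/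
open Filter

lemma aux_exp_lb (a : ℝ) (h0 : 0 ≤ a) (h : a ≤ 1/4) :
    Real.exp (-(4*a)) ≤ 1 - 2*a := by
  have hx : (1:ℝ) ≤ (1 - 2*a) * Real.exp (4*a) := by
    nlinarith [Real.add_one_le_exp (4*a)]
  rw [Real.exp_neg, inv_eq_one_div, div_le_iff₀ (Real.exp_pos _)]
  linarith

/-- If `α > 1`, `0 < cₓ < 1/2`, `0 < liminf cₓ xᵅ ≤ limsup cₓ xᵅ < ∞`,
`pₓ = 1/2 - cₓ`, `qₓ = 1/2 + cₓ` (with `p₀ = 1`), and `π̃(0) = 1`,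
`π̃(x) = ∏_{k=1}^x p_{k-1}/q_k`, then `∑ₓ π̃(x) = ∞`; in particular the birth and death chain
with these transition probabilities is not positive recurrent. -/
theorem stmt10 (α : ℝ) (hα : 1 < α) (c : ℕ → ℝ)
    (hc : ∀ x ≥ 1, 0 < c x ∧ c x < 1 / 2)
    (hliminf : ∃ c₀ > 0, ∀ᶠ x : ℕ in atTop, c₀ ≤ c x * (x : ℝ) ^ α)
    (hlimsup : ∃ C : ℝ, ∀ᶠ x : ℕ in atTop, c x * (x : ℝ) ^ α ≤ C)
    (p q : ℕ → ℝ) (hp0 : p 0 = 1)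
    (hp : ∀ x ≥ 1, p x = 1 / 2 - c x)
    (hq : ∀ x ≥ 1, q x = 1 / 2 + c x)
    (πt : ℕ → ℝ)
    (hπt : ∀ x, πt x = ∏ k ∈ Finset.Icc 1 x, p (k - 1) / q k) :
    ¬ Summable πt := by
  intro hsum
  obtain ⟨C, hC⟩ := hlimsup
  obtain ⟨c₀, hc₀, hlb⟩ := hliminf
  have hCpos : 0 < C := by
    obtain ⟨k, h1, h2⟩ := (hlb.and hC).exists
    linarith
  -- the nonneg truncation of c
  set c' : ℕ → ℝ := fun k => if 1 ≤ k then c k else 0 with hc'def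
  have hc'nonneg : ∀ k, 0 ≤ c' k := by
    intro k
    by_cases h : 1 ≤ k
    · simp only [hc'def, if_pos h]; exact (hc k h).1.le
    · simp [hc'def, h]
  have hc'eq : ∀ k, 1 ≤ k → c' k = c k := by
    intro k h; simp [hc'def, h]
  -- summability of c'
  obtain ⟨M, hM⟩ := eventually_atTop.mp hC
  have hs1 : Summable (fun n : ℕ => ((n:ℝ) ^ α)⁻¹) := Real.summable_nat_rpow_inv.2 hα
  have hs2 : Summable (fun n : ℕ => C * ((n:ℝ) ^ α)⁻¹) := hs1.mul_left C
  have hs3 : Summable (fun n : ℕ => c' (n + (M+1))) := by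
    apply Summable.of_nonneg_of_le (fun n => hc'nonneg _) ?_ ((summable_nat_add_iff (M+1)).2 hs2)
    intro n
    have hk : 1 ≤ n + (M+1) := by omega
    have hpow : (0:ℝ) < ((n + (M+1) : ℕ):ℝ) ^ α := by
      apply Real.rpow_pos_of_pos
      exact_mod_cast Nat.pos_of_ne_zero (by omega)
    have hMn := hM (n + (M+1)) (by omega)
    rw [hc'eq _ hk, ← div_eq_mul_inv, le_div_iff₀ hpow]
    exact hMn
  have hs : Summable c' := (summable_nat_add_iff (M+1)).1 hs3
  have hsh : Summable (fun k => c' (k - 1)) := by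
    rw [← summable_nat_add_iff 1]
    simpa using hs
  set g : ℕ → ℝ := fun k => 4 * (c' (k-1) + c' k) with hgdef
  have hg : Summable g := (hsh.add hs).mul_left 4
  have hg0 : ∀ k, 0 ≤ g k := fun k => by
    have := hc'nonneg (k-1); have := hc'nonneg k
    simp only [hgdef]; linarith
  -- find N ≥ 1 with c k ≤ 1/4 for k ≥ N
  have hsmall : ∀ᶠ k : ℕ in atTop, c k ≤ 1/4 := by
    have hpl : ∀ᶠ k : ℕ in atTop, (4*C) ≤ (k:ℝ)^α := by
      have ht : Tendsto (fun k : ℕ => (k:ℝ)^α) atTop atTop :=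
        (tendsto_rpow_atTop (by linarith : 0 < α)).comp tendsto_natCast_atTop_atTop
      exact ht.eventually_ge_atTop _
    filter_upwards [hC, hpl, eventually_ge_atTop 1] with k h1 h2 h3
    have hc0 : 0 ≤ c k := (hc k h3).1.le
    nlinarith [mul_le_mul_of_nonneg_left h2 hc0]
  obtain ⟨N0, hN0⟩ := eventually_atTop.mp hsmall
  set N := max N0 1 with hNdef
  have hN1 : 1 ≤ N := le_max_right _ _
  have hNsmall : ∀ k, N ≤ k → c k ≤ 1/4 := fun k hk => hN0 k (le_trans (le_max_left _ _) hk)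
  -- positivity of factors
  have hfpos : ∀ k, 1 ≤ k → 0 < p (k-1) / q k := by
    intro k hk
    have hqpos : 0 < q k := by rw [hq k hk]; linarith [(hc k hk).1]
    have hppos : 0 < p (k-1) := by
      rcases Nat.lt_or_ge k 2 with h | h
      · have : k = 1 := by omega
        subst this; simpa [hp0] using one_pos
      · have hk1 : 1 ≤ k - 1 := by omega
        rw [hp (k-1) hk1]; linarith [(hc (k-1) hk1).2]
    positivity
  have hπpos : ∀ x, 0 < πt x := by
    intro x
    rw [hπt]
    exact Finset.prod_pos (fun k hk => hfpos k (Finset.mem_Icc.mp hk).1)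
  -- split product
  have hIcc : ∀ m : ℕ, Finset.Icc 1 m = Finset.Ioc 0 m := by
    intro m; ext a; simp; omega
  have hsplit : ∀ x, N ≤ x → πt x = πt N * ∏ k ∈ Finset.Ioc N x, p (k-1) / q k := by
    intro x hx
    rw [hπt, hπt, hIcc, hIcc, ← Finset.prod_Ioc_consecutive _ (Nat.zero_le N) hx]
  -- factor lower bound
  have hfk : ∀ k, N < k → Real.exp (-(g k)) ≤ p (k-1) / q k := by
    intro k hk
    have hk2 : 2 ≤ k := by omega
    have hk1 : 1 ≤ k - 1 := by omega
    have hkm : N ≤ k - 1 := by omega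
    set a := c (k-1) with hadef
    set b := c k with hbdef
    have ha0 : 0 ≤ a := (hc (k-1) hk1).1.le
    have ha4 : a ≤ 1/4 := hNsmall (k-1) hkm
    have hb0 : 0 ≤ b := (hc k (by omega)).1.le
    have hb4 : b ≤ 1/4 := hNsmall k (by omega)
    have hgk : g k = 4*(a+b) := by
      simp only [hgdef]
      rw [hc'eq _ hk1, hc'eq k (by omega)]
    rw [hp (k-1) hk1, hq k (by omega), ← hadef, ← hbdef]
    have e1 : (1:ℝ)/2 * Real.exp (-(4*a)) ≤ 1/2 - a := by
      have := aux_exp_lb a ha0 ha4; linarith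
    have e2 : (1:ℝ)/2 + b ≤ 1/2 * Real.exp (2*b) := by
      nlinarith [Real.add_one_le_exp (2*b)]
    have e3 : Real.exp (-(g k)) ≤ Real.exp (-(4*a) - 2*b) := by
      apply Real.exp_le_exp.2
      rw [hgk]; linarith
    have e4 : Real.exp (-(4*a) - 2*b) = (1/2 * Real.exp (-(4*a))) / (1/2 * Real.exp (2*b)) := by
      rw [mul_div_mul_left _ _ (by norm_num : (1:ℝ)/2 ≠ 0), Real.exp_sub]
    calc Real.exp (-(g k)) ≤ Real.exp (-(4*a) - 2*b) := e3
      _ = (1/2 * Real.exp (-(4*a))) / (1/2 * Real.exp (2*b)) := e4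
      _ ≤ (1/2 - a) / (1/2 + b) := by
          apply div_le_div₀ (by linarith) e1 (by linarith) e2
  -- key lower bound
  set G := ∑' k, g k with hGdef
  have key : ∀ x, N ≤ x → πt N * Real.exp (-G) ≤ πt x := by
    intro x hx
    rw [hsplit x hx]
    apply mul_le_mul_of_nonneg_left ?_ (hπpos N).le
    calc Real.exp (-G)
        ≤ Real.exp (-(∑ k ∈ Finset.Ioc N x, g k)) := by
          apply Real.exp_le_exp.2
          apply neg_le_neg
          exact Summable.sum_le_tsum _ (fun i _ => hg0 i) hg
      _ = ∏ k ∈ Finset.Ioc N x, Real.exp (-(g k)) := by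
          rw [← Real.exp_sum, Finset.sum_neg_distrib]
      _ ≤ ∏ k ∈ Finset.Ioc N x, p (k-1) / q k :=
          Finset.prod_le_prod (fun k _ => (Real.exp_pos _).le)
            (fun k hk => hfk k (Finset.mem_Ioc.mp hk).1)
  -- contradiction with tendsto 0
  have hδ : 0 < πt N * Real.exp (-G) := mul_pos (hπpos N) (Real.exp_pos _)
  have h0 : Tendsto πt atTop (nhds 0) := hsum.tendsto_atTop_zero
  have hev : ∀ᶠ x in atTop, πt x < πt N * Real.exp (-G) :=
    h0.eventually (gt_mem_nhds hδ)
  obtain ⟨x, hx1, hx2⟩ := ((eventually_ge_atTop N).and hev).exists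
  linarith [key x hx1]
end

section
/- Let (c_x)_{x≥1} be a sequence with 0 < c_x < 1/2 and c_x → 0 as x → ∞, and set p_x = 1/2 − c_x, q_x = 1/2 + c_x. Then lim_{n→∞} (2/n) ∑_{x=1}^{n−1} √(p_x q_{x+1}) = 1. Consequently, for the symmetric tridiagonal operator A' on ℓ²({1,2,...}) with entries a(x,x+1) = a(x+1,x) = √(p_x q_{x+1}) for x ≥ 1 and all other entries 0, one has sup{⟨A'f, f⟩ : f ∈ ℓ²({1,2,...}), ||f|| = 1} = 1 (the supremum being attained along the normalized indicator vectors f_n = n^{−1/2} 1_{{1,...,n}}). -/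
open Filter

/-- If `0 < cₓ < 1/2` and `cₓ → 0`, with `pₓ = 1/2 - cₓ`, `qₓ = 1/2 + cₓ`, then
`(2/n) ∑_{x=1}^{n-1} √(pₓ q_{x+1}) → 1`, and consequently for the symmetric tridiagonal
operator `A'` on `ℓ²({1,2,...})` with off-diagonal entries `√(pₓ q_{x+1})` (whose quadratic
form is `⟨A'f,f⟩ = 2 ∑_{x≥1} √(pₓ q_{x+1}) f(x) f(x+1)`), the supremum of `⟨A'f,f⟩` over unit
vectors is `1`. (Functions supported on `{1,2,...}` are encoded as `f : ℕ → ℝ` with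
`f 0 = 0`.) -/
theorem stmt11 (c : ℕ → ℝ)
    (hc : ∀ x ≥ 1, 0 < c x ∧ c x < 1 / 2)
    (hc0 : Tendsto c atTop (nhds 0))
    (p q : ℕ → ℝ)
    (hp : ∀ x ≥ 1, p x = 1 / 2 - c x)
    (hq : ∀ x ≥ 1, q x = 1 / 2 + c x) :
    Tendsto (fun n : ℕ =>
        (2 / (n : ℝ)) * ∑ x ∈ Finset.Icc 1 (n - 1), Real.sqrt (p x * q (x + 1)))
      atTop (nhds 1) ∧
    sSup {r : ℝ | ∃ f : ℕ → ℝ, f 0 = 0 ∧ (Summable fun x => f x ^ 2) ∧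
        (∑' x, f x ^ 2) = 1 ∧
        r = 2 * ∑' x : ℕ, (if 1 ≤ x then Real.sqrt (p x * q (x + 1)) * f x * f (x + 1) else 0)}
      = 1 := by
  have hp01 : ∀ x, 1 ≤ x → 0 ≤ p x ∧ p x ≤ 1 := by
    intro x hx
    have h := hc x hx
    rw [hp x hx]
    constructor <;> linarith [h.1, h.2]
  have hq01 : ∀ x, 1 ≤ x → 0 ≤ q x ∧ q x ≤ 1 := by
    intro x hx
    have h := hc x hx
    rw [hq x hx]
    constructor <;> linarith [h.1, h.2]
  set s : ℕ → ℝ := fun x => Real.sqrt (p x * q (x + 1)) with hsdef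
  have hs_nonneg : ∀ x, 0 ≤ s x := fun x => Real.sqrt_nonneg _
  have hs_le_one : ∀ x, 1 ≤ x → s x ≤ 1 := by
    intro x hx
    have h1 := hp01 x hx
    have h2 := hq01 (x + 1) (by omega)
    have : p x * q (x + 1) ≤ 1 := by nlinarith [h1.1, h1.2, h2.1, h2.2]
    calc s x ≤ Real.sqrt 1 := Real.sqrt_le_sqrt this
    _ = 1 := Real.sqrt_one
  -- Part 1 : Cesàro convergence
  have hpart1 : Tendsto (fun n : ℕ =>
      (2 / (n : ℝ)) * ∑ x ∈ Finset.Icc 1 (n - 1), s x) atTop (nhds 1) := by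
    have hc1 : Tendsto (fun x => c (x + 1)) atTop (nhds 0) :=
      hc0.comp (tendsto_add_atTop_nat 1)
    have hprod : Tendsto (fun x => (1/2 - c x) * (1/2 + c (x + 1))) atTop
        (nhds ((1/2 - 0) * (1/2 + 0))) :=
      (tendsto_const_nhds.sub hc0).mul (tendsto_const_nhds.add hc1)
    have hu : Tendsto (fun x => 2 * s x) atTop (nhds 1) := by
      have h2 : Tendsto (fun x => 2 * Real.sqrt ((1/2 - c x) * (1/2 + c (x + 1)))) atTop
          (nhds (2 * Real.sqrt ((1/2 - 0) * (1/2 + 0)))) :=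
        ((Real.continuous_sqrt.continuousAt.tendsto).comp hprod).const_mul 2
      have hval : (2 : ℝ) * Real.sqrt ((1/2 - 0) * (1/2 + 0)) = 1 := by
        rw [show ((1/2 - 0) * (1/2 + 0) : ℝ) = (1/2)^2 by norm_num,
          Real.sqrt_sq (by norm_num)]
        norm_num
      rw [hval] at h2
      refine Tendsto.congr' ?_ h2
      filter_upwards [eventually_ge_atTop 1] with x hx
      rw [hsdef]
      simp only [hp x hx, hq (x + 1) (by omega)]
    have hces := hu.cesaro
    have hzero : Tendsto (fun n : ℕ => (n : ℝ)⁻¹ * (2 * s 0)) atTop (nhds 0) := by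
      simpa using tendsto_inv_atTop_nhds_zero_nat.mul_const (2 * s 0)
    have hsub := hces.sub hzero
    rw [sub_zero] at hsub
    refine Tendsto.congr' ?_ hsub
    filter_upwards [eventually_ge_atTop 1] with n hn
    have hins : Finset.range n = insert 0 (Finset.Icc 1 (n - 1)) := by
      ext x
      simp only [Finset.mem_range, Finset.mem_insert, Finset.mem_Icc]
      omega
    rw [hins, Finset.sum_insert (by simp), ← Finset.mul_sum]
    ring
  refine ⟨hpart1, ?_⟩
  set S := {r : ℝ | ∃ f : ℕ → ℝ, f 0 = 0 ∧ (Summable fun x => f x ^ 2) ∧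
      (∑' x, f x ^ 2) = 1 ∧
      r = 2 * ∑' x : ℕ, (if 1 ≤ x then s x * f x * f (x + 1) else 0)} with hSdef
  -- Every element of S is at most 1
  have hub : ∀ r ∈ S, r ≤ 1 := by
    rintro r ⟨f, hf0, hfs, hfn, rfl⟩
    set g : ℕ → ℝ := fun x => if 1 ≤ x then s x * f x * f (x + 1) else 0 with hgdef
    have hf1 : Summable (fun x => f (x + 1) ^ 2) := (summable_nat_add_iff 1).2 hfs
    have habs : ∀ x, |g x| ≤ (f x ^ 2 + f (x + 1) ^ 2) / 2 := by
      intro x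
      rw [hgdef]
      by_cases hx : 1 ≤ x
      · simp only [hx, if_true]
        have h1 : |s x * f x * f (x + 1)| = s x * (|f x| * |f (x + 1)|) := by
          rw [mul_assoc, abs_mul, abs_mul, abs_of_nonneg (hs_nonneg x)]
        rw [h1]
        have h2 : s x * (|f x| * |f (x + 1)|) ≤ 1 * (|f x| * |f (x + 1)|) :=
          mul_le_mul_of_nonneg_right (hs_le_one x hx)
            (mul_nonneg (abs_nonneg _) (abs_nonneg _))
        have h3 := two_mul_le_add_sq |f x| |f (x + 1)|
        rw [sq_abs, sq_abs] at h3
        linarith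
      · simp only [hx, if_false, abs_zero]
        positivity
    have hgsum : Summable g := by
      rw [← summable_abs_iff]
      exact Summable.of_nonneg_of_le (fun x => abs_nonneg _) habs
        ((hfs.add hf1).div_const 2)
    set h1 : ℕ → ℝ := fun x => if 1 ≤ x then p x * f x ^ 2 else 0 with hh1def
    set F : ℕ → ℝ := fun x => if 2 ≤ x then q x * f x ^ 2 else 0 with hFdef
    have hh1sum : Summable h1 := by
      refine Summable.of_nonneg_of_le ?_ ?_ hfs
      · intro x; simp only [hh1def]; split
        · exact mul_nonneg (hp01 x (by omega)).1 (sq_nonneg _)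
        · exact le_rfl
      · intro x; simp only [hh1def]; split
        · rename_i hx
          have := (hp01 x hx).2
          nlinarith [sq_nonneg (f x)]
        · positivity
    have hFsum : Summable F := by
      refine Summable.of_nonneg_of_le ?_ ?_ hfs
      · intro x; simp only [hFdef]; split
        · exact mul_nonneg (hq01 x (by omega)).1 (sq_nonneg _)
        · exact le_rfl
      · intro x; simp only [hFdef]; split
        · rename_i hx
          have := (hq01 x (by omega)).2
          nlinarith [sq_nonneg (f x)]
        · positivity
    have hFshift : Summable (fun x => F (x + 1)) := (summable_nat_add_iff 1).2 hFsum
    have hpw : ∀ x, 2 * g x ≤ h1 x + F (x + 1) := by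
      intro x
      rw [hgdef, hh1def, hFdef]
      by_cases hx : 1 ≤ x
      · simp only [hx, if_true, show 2 ≤ x + 1 by omega, if_true]
        have hp0 : 0 ≤ p x := (hp01 x hx).1
        have hq0 : 0 ≤ q (x + 1) := (hq01 (x + 1) (by omega)).1
        have e1 : (Real.sqrt (p x) * f x) ^ 2 = p x * f x ^ 2 := by
          rw [mul_pow, Real.sq_sqrt hp0]
        have e2 : (Real.sqrt (q (x + 1)) * f (x + 1)) ^ 2 = q (x + 1) * f (x + 1) ^ 2 := by
          rw [mul_pow, Real.sq_sqrt hq0]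
        have e3 : 2 * (s x * f x * f (x + 1)) =
            2 * (Real.sqrt (p x) * f x) * (Real.sqrt (q (x + 1)) * f (x + 1)) := by
          rw [hsdef]
          simp only
          rw [Real.sqrt_mul hp0]
          ring
        have h4 := two_mul_le_add_sq (Real.sqrt (p x) * f x)
          (Real.sqrt (q (x + 1)) * f (x + 1))
        rw [e1, e2] at h4
        linarith [e3 ▸ h4]
      · simp only [hx, if_false]
        have : x = 0 := by omega
        subst this
        norm_num
    have key : 2 * ∑' x, g x ≤ 1 := by
      rw [← tsum_mul_left]
      calc ∑' x, 2 * g x ≤ ∑' x, (h1 x + F (x + 1)) :=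
            Summable.tsum_le_tsum hpw (hgsum.mul_left 2) (hh1sum.add hFshift)
        _ = (∑' x, h1 x) + ∑' x, F (x + 1) := Summable.tsum_add hh1sum hFshift
        _ = (∑' x, h1 x) + ∑' x, F x := by
            rw [Summable.tsum_eq_zero_add hFsum]
            have : F 0 = 0 := by rw [hFdef]; norm_num
            rw [this, zero_add]
        _ = ∑' x, (h1 x + F x) := (Summable.tsum_add hh1sum hFsum).symm
        _ ≤ ∑' x, f x ^ 2 := by
            refine Summable.tsum_le_tsum ?_ (hh1sum.add hFsum) hfs
            intro x
            rw [hh1def, hFdef]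
            rcases Nat.lt_or_ge x 1 with hx | hx
            · have : x = 0 := by omega
              subst this
              simp [hf0]
            · rcases Nat.lt_or_ge x 2 with hx2 | hx2
              · have : x = 1 := by omega
                subst this
                simp only [le_refl, if_true, show ¬(2 ≤ 1) by omega, if_false, add_zero]
                have := (hp01 1 le_rfl).2
                nlinarith [sq_nonneg (f 1)]
              · simp only [hx, if_true, hx2, if_true]
                have hpq : p x + q x = 1 := by
                  rw [hp x (by omega), hq x (by omega)]; ring
                nlinarith [sq_nonneg (f x)]
        _ = 1 := hfn
    exact key
  -- Each normalized indicator gives an element of S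
  set L : ℕ → ℝ := fun n => (2 / (n : ℝ)) * ∑ x ∈ Finset.Icc 1 (n - 1), s x with hLdef
  have hmem : ∀ n : ℕ, 1 ≤ n → L n ∈ S := by
    intro n hn
    have hn0 : (0 : ℝ) < n := by exact_mod_cast hn
    set f : ℕ → ℝ := fun x => if 1 ≤ x ∧ x ≤ n then (Real.sqrt n)⁻¹ else 0 with hfdef
    have hfsq : ∀ x, f x ^ 2 = if 1 ≤ x ∧ x ≤ n then (n : ℝ)⁻¹ else 0 := by
      intro x
      simp only [hfdef]
      split
      · rw [inv_pow, Real.sq_sqrt hn0.le]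
      · norm_num
    have hsupp : ∀ x ∉ Finset.Icc 1 n, f x ^ 2 = 0 := by
      intro x hx
      rw [Finset.mem_Icc] at hx
      rw [hfsq]
      simp only [hx, if_false]
    refine ⟨f, by rw [hfdef]; norm_num, summable_of_ne_finset_zero hsupp, ?_, ?_⟩
    · rw [tsum_eq_sum hsupp]
      have : ∀ x ∈ Finset.Icc 1 n, f x ^ 2 = (n : ℝ)⁻¹ := by
        intro x hx
        rw [Finset.mem_Icc] at hx
        rw [hfsq, if_pos hx]
      rw [Finset.sum_congr rfl this, Finset.sum_const, Nat.card_Icc]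
      simp only [Nat.add_sub_cancel, nsmul_eq_mul]
      field_simp
    · set g : ℕ → ℝ := fun x => if 1 ≤ x then s x * f x * f (x + 1) else 0 with hgdef
      have hmulself : (Real.sqrt n)⁻¹ * (Real.sqrt n)⁻¹ = (n : ℝ)⁻¹ := by
        rw [← mul_inv, Real.mul_self_sqrt hn0.le]
      have hgsupp : ∀ x ∉ Finset.Icc 1 (n - 1), g x = 0 := by
        intro x hx
        rw [Finset.mem_Icc] at hx
        rw [hgdef]
        by_cases h1x : 1 ≤ x
        · simp only [h1x, if_true]
          have hxn : ¬(x ≤ n - 1) := by tauto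
          have : f (x + 1) = 0 := by
            rw [hfdef]
            simp only
            rw [if_neg]
            omega
          rw [this, mul_zero]
        · simp [h1x]
      have hgval : ∀ x ∈ Finset.Icc 1 (n - 1), g x = s x * (n : ℝ)⁻¹ := by
        intro x hx
        rw [Finset.mem_Icc] at hx
        rw [hgdef]
        simp only [hx.1, if_true]
        have e1 : f x = (Real.sqrt n)⁻¹ := by
          rw [hfdef]; simp only; rw [if_pos ⟨hx.1, by omega⟩]
        have e2 : f (x + 1) = (Real.sqrt n)⁻¹ := by
          rw [hfdef]; simp only; rw [if_pos ⟨by omega, by omega⟩]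
        rw [e1, e2, mul_assoc, hmulself]
      rw [hLdef]
      simp only
      rw [show (∑' x, (if 1 ≤ x then s x * f x * f (x + 1) else 0)) = ∑' x, g x from rfl,
        tsum_eq_sum hgsupp, Finset.sum_congr rfl hgval, ← Finset.sum_mul]
      field_simp
  have hbdd : BddAbove S := ⟨1, hub⟩
  have hne : S.Nonempty := ⟨L 1, hmem 1 le_rfl⟩
  refine le_antisymm (csSup_le hne hub) ?_
  have hev : ∀ᶠ n in atTop, L n ≤ sSup S := by
    filter_upwards [eventually_ge_atTop 1] with n hn
    exact le_csSup hbdd (hmem n hn)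
  exact le_of_tendsto hpart1 hev
end

section
/- Let π be a strictly positive probability measure on ℕ and let V ∈ L²(π). Define E₀(φ) := ∑_{x≥0} (φ(x+1) − φ(x))² π(x) and Φ(φ) := 2⟨V,φ⟩_π − E₀(φ). Then sup{Φ(φ) : φ ∈ L²(π)} = ∑_{x=0}^{∞} π(x)^{−1} ( ∑_{y=0}^{x} V(y)π(y) )², as an equality in the extended reals [0,∞]; in particular the supremum is finite if and only if ∑_x π(x)^{−1}(∑_{y≤x} V(y)π(y))² < ∞. -/
/-!
Write `F x = ∑_{y ≤ x} V y π y` and `G = ∑ₓ V x π x`. If `G ≠ 0`, the constants already make `Φ`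
unbounded, while `π⁻¹ F²` is not summable because `F x → G` and `π x → 0`.

Otherwise, summation by parts gives `⟨V, φ⟩_π = -∑ₓ F x (φ (x+1) - φ x)` whenever `∑ F² / π < ∞`:
the boundary terms `F N φ N` tend to `0` because `F / √π` and `φ √π` are both in `ℓ²`. Completing
the square then bounds `Φ φ` by `∑ F² / π`, with equality for `φ (x+1) - φ x = -F x / π x`, and
truncating this maximiser after `N` steps gives `Φ = ∑_{x < N} F² / π`.
-/

open scoped ENNReal

open Filter Finset Topology

lemma summable_mul_of_summable_sq_mul {ι : Type*} {w a b : ι → ℝ} (hw : ∀ i, 0 < w i)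
    (ha : Summable fun i => a i ^ 2 * w i) (hb : Summable fun i => (w i)⁻¹ * b i ^ 2) :
    Summable fun i => a i * b i := by
  refine .of_norm_bounded ((ha.add hb).div_const 2) fun i => ?_
  have hwi := hw i
  have hsq := sq_nonneg (|a i| * w i - |b i|)
  rw [sub_sq, mul_pow, sq_abs, sq_abs] at hsq
  rw [Real.norm_eq_abs, abs_mul, le_div_iff₀ two_pos, ← mul_le_mul_iff_left₀ hwi]
  field_simp
  linarith

lemma tsum_mul_eq_neg_tsum_partialSum_mul_sub {a φ : ℕ → ℝ}
    (haφ : Summable fun x => a x * φ x)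
    (hd : Summable fun k => (∑ y ∈ range (k + 1), a y) * (φ (k + 1) - φ k))
    (hb : Tendsto (fun N => (∑ y ∈ range (N + 1), a y) * φ N) atTop (𝓝 0)) :
    ∑' x, a x * φ x = -∑' k, (∑ y ∈ range (k + 1), a y) * (φ (k + 1) - φ k) := by
  have hparts : ∀ N, ∑ x ∈ range (N + 1), a x * φ x =
      (∑ y ∈ range (N + 1), a y) * φ N -
        ∑ k ∈ range N, (∑ y ∈ range (k + 1), a y) * (φ (k + 1) - φ k) := by
    intro N
    simpa [smul_eq_mul, mul_comm] using sum_range_by_parts φ a (N + 1)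
  refine tendsto_nhds_unique (haφ.hasSum.tendsto_sum_nat.comp (tendsto_add_atTop_nat 1)) ?_
  simp only [Function.comp_def, hparts]
  simpa using hb.sub hd.hasSum.tendsto_sum_nat

lemma tsum_eq_zero_of_summable_inv_mul_partialSum_sq {w a : ℕ → ℝ} (hw : ∀ x, w x ≠ 0)
    (hw0 : Tendsto w atTop (𝓝 0)) (ha : Summable a)
    (hS : Summable fun x => (w x)⁻¹ * (∑ y ∈ range (x + 1), a y) ^ 2) :
    ∑' x, a x = 0 := by
  have hsq : Tendsto (fun N => (∑ y ∈ range (N + 1), a y) ^ 2) atTop (𝓝 0) := by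
    refine (zero_mul (0 : ℝ) ▸ hw0.mul hS.tendsto_atTop_zero).congr fun N => ?_
    rw [mul_inv_cancel_left₀ (hw N)]
  have hlim := ((ha.hasSum.tendsto_sum_nat.comp (tendsto_add_atTop_nat 1)).pow 2)
  exact pow_eq_zero_iff two_ne_zero |>.1 (tendsto_nhds_unique hlim hsq)

lemma tsum_ofReal_ne_top_iff_summable {ι : Type*} {f : ι → ℝ} (hf : ∀ i, 0 ≤ f i) :
    ∑' i, ENNReal.ofReal (f i) ≠ ∞ ↔ Summable f :=
  ⟨fun h => by simpa [hf] using ENNReal.summable_toReal h, Summable.tsum_ofReal_ne_top⟩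

lemma coe_tsum_ofReal_of_summable {ι : Type*} {f : ι → ℝ} (hf : ∀ i, 0 ≤ f i)
    (h : Summable f) :
    ((∑' i, ENNReal.ofReal (f i) : ℝ≥0∞) : EReal) = ((∑' i, f i : ℝ) : EReal) := by
  rw [← ENNReal.ofReal_tsum_of_nonneg hf h, EReal.coe_ennreal_ofReal,
    max_eq_left (tsum_nonneg hf)]

noncomputable def variationalFunctional (π V φ : ℕ → ℝ) : EReal :=
  ((2 * ∑' x, V x * φ x * π x : ℝ) : EReal) -
    ((∑' x : ℕ, ENNReal.ofReal ((φ (x + 1) - φ x) ^ 2 * π x) : ℝ≥0∞) : EReal)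

section
variable {π V : ℕ → ℝ}

lemma summable_mul_mul_of_summable_sq_mul (hπ : ∀ x, 0 < π x)
    (hV : Summable fun x => V x ^ 2 * π x) {φ : ℕ → ℝ} (hφ : Summable fun x => φ x ^ 2 * π x) :
    Summable fun x => V x * π x * φ x := by
  have hφπ : Summable fun x => (π x)⁻¹ * (φ x * π x) ^ 2 :=
    hφ.congr fun x => by field_simp [(hπ x).ne']
  simpa only [mul_assoc, mul_comm (π _)] using summable_mul_of_summable_sq_mul hπ hV hφπ

lemma summable_mul_of_summable_sq_mul_of_summable (hπ : ∀ x, 0 < π x) (hπs : Summable π)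
    (hV : Summable fun x => V x ^ 2 * π x) : Summable fun x => V x * π x := by
  simpa using summable_mul_mul_of_summable_sq_mul hπ hV (φ := fun _ => 1) (by simpa using hπs)

lemma two_tsum_mul_sub_tsum_sq_le (hπ : ∀ x, 0 < π x) (hV : Summable fun x => V x ^ 2 * π x)
    {φ : ℕ → ℝ} (hφ : Summable fun x => φ x ^ 2 * π x)
    (hE : Summable fun x => (φ (x + 1) - φ x) ^ 2 * π x)
    (hS : Summable fun x => (π x)⁻¹ * (∑ y ∈ range (x + 1), V y * π y) ^ 2) :
    2 * ∑' x, V x * φ x * π x - ∑' x, (φ (x + 1) - φ x) ^ 2 * π x ≤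
      ∑' x, (π x)⁻¹ * (∑ y ∈ range (x + 1), V y * π y) ^ 2 := by
  set F := fun k => ∑ y ∈ range (k + 1), V y * π y
  have hFd : Summable fun k => F k * (φ (k + 1) - φ k) := by
    simpa only [mul_comm (F _)] using summable_mul_of_summable_sq_mul hπ hE hS
  have hFφ : Tendsto (fun N => F N * φ N) atTop (𝓝 0) := by
    simpa only [mul_comm (F _)] using
      (summable_mul_of_summable_sq_mul hπ hφ hS).tendsto_atTop_zero
  have hI : ∑' x, V x * φ x * π x = -∑' k, F k * (φ (k + 1) - φ k) := by
    simpa only [mul_right_comm] using tsum_mul_eq_neg_tsum_partialSum_mul_sub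
      (summable_mul_mul_of_summable_sq_mul hπ hV hφ) hFd hFφ
  -- completing the square: `π⁻¹ F² + 2 F d + d² π = π⁻¹ (F + d π)²`
  have hsq : ∀ k, -2 * (F k * (φ (k + 1) - φ k)) - (φ (k + 1) - φ k) ^ 2 * π k ≤
      (π k)⁻¹ * F k ^ 2 := by
    intro k
    have hπk := hπ k
    have : 0 ≤ (π k)⁻¹ * (F k + (φ (k + 1) - φ k) * π k) ^ 2 := by positivity
    field_simp at this ⊢
    linarith
  rw [hI, ← neg_mul_comm, ← tsum_mul_left, ← (hFd.mul_left _).tsum_sub hE]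
  exact Summable.tsum_le_tsum hsq ((hFd.mul_left _).sub hE) hS

lemma variationalFunctional_le (hπ : ∀ x, 0 < π x) (hV : Summable fun x => V x ^ 2 * π x)
    {φ : ℕ → ℝ} (hφ : Summable fun x => φ x ^ 2 * π x) :
    variationalFunctional π V φ ≤ ((∑' x : ℕ, ENNReal.ofReal
      ((π x)⁻¹ * (∑ y ∈ range (x + 1), V y * π y) ^ 2) : ℝ≥0∞) : EReal) := by
  have hE0 : ∀ x, 0 ≤ (φ (x + 1) - φ x) ^ 2 * π x := fun x => by have := hπ x; positivity
  have hS0 : ∀ x, 0 ≤ (π x)⁻¹ * (∑ y ∈ range (x + 1), V y * π y) ^ 2 :=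
    fun x => by have := hπ x; positivity
  by_cases hE : Summable fun x => (φ (x + 1) - φ x) ^ 2 * π x
  · by_cases hS : Summable fun x => (π x)⁻¹ * (∑ y ∈ range (x + 1), V y * π y) ^ 2
    · rw [variationalFunctional, coe_tsum_ofReal_of_summable hE0 hE,
        coe_tsum_ofReal_of_summable hS0 hS, ← EReal.coe_sub, EReal.coe_le_coe_iff]
      exact two_tsum_mul_sub_tsum_sq_le hπ hV hφ hE hS
    · rw [not_ne_iff.1 (mt (tsum_ofReal_ne_top_iff_summable hS0).1 hS), EReal.coe_ennreal_top]
      exact le_top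
  · rw [variationalFunctional, not_ne_iff.1 (mt (tsum_ofReal_ne_top_iff_summable hE0).1 hE),
      EReal.coe_ennreal_top, EReal.sub_top]
    exact bot_le

lemma variationalFunctional_const (c : ℝ) :
    variationalFunctional π V (fun _ => c) = ((2 * (c * ∑' x, V x * π x) : ℝ) : EReal) := by
  simp [variationalFunctional, ← tsum_mul_left, mul_left_comm c, mul_assoc]

lemma exists_variationalFunctional_eq (hπ : ∀ x, 0 < π x) (hπs : Summable π)
    (hV : Summable fun x => V x ^ 2 * π x) (hG : ∑' x, V x * π x = 0) (N : ℕ) :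
    ∃ φ : ℕ → ℝ, (Summable fun x => φ x ^ 2 * π x) ∧ variationalFunctional π V φ =
      ((∑ x ∈ range N, ENNReal.ofReal
        ((π x)⁻¹ * (∑ y ∈ range (x + 1), V y * π y) ^ 2) : ℝ≥0∞) : EReal) := by
  set F := fun k => ∑ y ∈ range (k + 1), V y * π y
  -- the maximiser `φ (k+1) - φ k = -F k / π k`, frozen from step `N` on
  set φ := fun k => -∑ j ∈ range (min k N), F j / π j
  have hconst : ∀ k, N ≤ k → φ k = φ N := fun k hk => by simp [φ, min_eq_right hk]
  have hd_lt : ∀ k < N, φ (k + 1) - φ k = -(F k / π k) := fun k hk => by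
    simp [φ, min_eq_left hk.le, min_eq_left (Nat.succ_le_of_lt hk), sum_range_succ]
  have hd_ge : ∀ k, N ≤ k → φ (k + 1) - φ k = 0 := fun k hk => by
    rw [hconst k hk, hconst (k + 1) (by omega), sub_self]
  have hφ : Summable fun x => φ x ^ 2 * π x := by
    refine (summable_nat_add_iff N).1 (((summable_nat_add_iff N).2 hπs).mul_left (φ N ^ 2)
      |>.congr fun k => ?_)
    rw [hconst (k + N) (by omega)]
  refine ⟨φ, hφ, ?_⟩
  have hS0 : ∀ k, 0 ≤ (π k)⁻¹ * F k ^ 2 := fun k => by have := hπ k; positivity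
  have hd_sq : ∀ k < N, (φ (k + 1) - φ k) ^ 2 * π k = (π k)⁻¹ * F k ^ 2 := fun k hk => by
    rw [hd_lt k hk]; field_simp [(hπ k).ne']
  have hE : ∑' x, ENNReal.ofReal ((φ (x + 1) - φ x) ^ 2 * π x) =
      ENNReal.ofReal (∑ x ∈ range N, (π x)⁻¹ * F x ^ 2) := by
    rw [ENNReal.ofReal_sum_of_nonneg fun x _ => hS0 x,
      tsum_eq_sum (s := range N) fun k hk => by rw [hd_ge k (by simpa using hk)]; simp]
    exact sum_congr rfl fun k hk => by rw [hd_sq k (mem_range.1 hk)]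
  have hVπ := summable_mul_of_summable_sq_mul_of_summable hπ hπs hV
  have hFφ : Tendsto (fun k => F k * φ k) atTop (𝓝 0) := by
    have hF : Tendsto F atTop (𝓝 0) :=
      hG ▸ hVπ.hasSum.tendsto_sum_nat.comp (tendsto_add_atTop_nat 1)
    refine (zero_mul (φ N) ▸ hF.mul_const (φ N)).congr' ?_
    filter_upwards [eventually_ge_atTop N] with k hk
    rw [hconst k hk]
  have hFd_supp : ∀ k ∉ range N, F k * (φ (k + 1) - φ k) = 0 := fun k hk => by
    rw [hd_ge k (by simpa using hk), mul_zero]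
  have hI : ∑' x, V x * φ x * π x = ∑ x ∈ range N, (π x)⁻¹ * F x ^ 2 := by
    calc ∑' x, V x * φ x * π x = -∑' k, F k * (φ (k + 1) - φ k) := by
          simpa only [mul_right_comm] using tsum_mul_eq_neg_tsum_partialSum_mul_sub
            (summable_mul_mul_of_summable_sq_mul hπ hV hφ)
            (summable_of_ne_finset_zero hFd_supp) hFφ
      _ = ∑ x ∈ range N, (π x)⁻¹ * F x ^ 2 := by
          rw [tsum_eq_sum hFd_supp, ← sum_neg_distrib]
          refine sum_congr rfl fun k hk => ?_
          rw [hd_lt k (mem_range.1 hk)]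
          field_simp [(hπ k).ne']
  rw [variationalFunctional, hI, hE, ← ENNReal.ofReal_sum_of_nonneg fun x _ => hS0 x,
    EReal.coe_ennreal_ofReal, max_eq_left (sum_nonneg fun x _ => hS0 x), ← EReal.coe_sub]
  ring_nf

theorem sSup_variationalFunctional (hπ : ∀ x, 0 < π x) (hπs : Summable π)
    (hV : Summable fun x => V x ^ 2 * π x) :
    sSup {r : EReal | ∃ φ : ℕ → ℝ, (Summable fun x => φ x ^ 2 * π x) ∧
        r = variationalFunctional π V φ} =
      ((∑' x : ℕ, ENNReal.ofReal
          ((π x)⁻¹ * (∑ y ∈ range (x + 1), V y * π y) ^ 2) : ℝ≥0∞) : EReal) := by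
  rcases eq_or_ne (∑' x, V x * π x) 0 with hG | hG
  · refine le_antisymm (sSup_le ?_) ?_
    · rintro _ ⟨φ, hφ, rfl⟩
      exact variationalFunctional_le hπ hV hφ
    · refine le_of_tendsto'
        ((continuous_coe_ennreal_ereal.tendsto _).comp (ENNReal.tendsto_nat_tsum _)) fun N => ?_
      obtain ⟨φ, hφ, hΦ⟩ := exists_variationalFunctional_eq hπ hπs hV hG N
      exact le_sSup ⟨φ, hφ, hΦ.symm⟩
  · have hS : ¬Summable fun x => (π x)⁻¹ * (∑ y ∈ range (x + 1), V y * π y) ^ 2 := fun hS => by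
      exact hG (tsum_eq_zero_of_summable_inv_mul_partialSum_sq (fun x => (hπ x).ne')
        hπs.tendsto_atTop_zero (summable_mul_of_summable_sq_mul_of_summable hπ hπs hV) hS)
    have hS0 : ∀ x, 0 ≤ (π x)⁻¹ * (∑ y ∈ range (x + 1), V y * π y) ^ 2 :=
      fun x => by have := hπ x; positivity
    rw [not_ne_iff.1 (mt (tsum_ofReal_ne_top_iff_summable hS0).1 hS), EReal.coe_ennreal_top,
      EReal.eq_top_iff_forall_lt]
    intro y
    obtain ⟨c, hc⟩ : ∃ c, 2 * (c * ∑' x, V x * π x) = y + 1 :=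
      ⟨(y + 1) / (2 * ∑' x, V x * π x), by field_simp⟩
    refine lt_of_lt_of_le ?_
      (le_sSup ⟨fun _ => c, hπs.mul_left (c ^ 2), (variationalFunctional_const c).symm⟩)
    rw [EReal.coe_lt_coe_iff, hc]
    exact lt_add_one y

end

/-- For a strictly positive probability measure `π` on `ℕ` and `V ∈ L²(π)`,
with `E₀(φ) = ∑ₓ (φ(x+1)-φ(x))²π(x)` and `Φ(φ) = 2⟨V,φ⟩_π - E₀(φ)` (valued in the extended
reals), one has `sup {Φ(φ) : φ ∈ L²(π)} = ∑ₓ π(x)⁻¹ (∑_{y=0}^x V(y)π(y))²` as an equality in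
`[0,∞]`; in particular the supremum is finite iff `∑ₓ π(x)⁻¹(∑_{y≤x} V(y)π(y))² < ∞`. -/
theorem stmt16 (π : ℕ → ℝ) (hπpos : ∀ x, 0 < π x) (hπ1 : ∑' x, π x = 1)
    (V : ℕ → ℝ) (hV : Summable fun x => V x ^ 2 * π x) :
    sSup {r : EReal | ∃ φ : ℕ → ℝ, (Summable fun x => φ x ^ 2 * π x) ∧
        r = ((2 * ∑' x, V x * φ x * π x : ℝ) : EReal) -
          ((∑' x : ℕ, ENNReal.ofReal ((φ (x + 1) - φ x) ^ 2 * π x) : ℝ≥0∞) : EReal)} =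
      ((∑' x : ℕ, ENNReal.ofReal
          ((π x)⁻¹ * (∑ y ∈ Finset.range (x + 1), V y * π y) ^ 2) : ℝ≥0∞) : EReal) ∧
    (sSup {r : EReal | ∃ φ : ℕ → ℝ, (Summable fun x => φ x ^ 2 * π x) ∧
        r = ((2 * ∑' x, V x * φ x * π x : ℝ) : EReal) -
          ((∑' x : ℕ, ENNReal.ofReal ((φ (x + 1) - φ x) ^ 2 * π x) : ℝ≥0∞) : EReal)} < ⊤ ↔
      Summable fun x : ℕ => (π x)⁻¹ * (∑ y ∈ Finset.range (x + 1), V y * π y) ^ 2) := by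
  have hπs : Summable π := by
    by_contra h
    simp [tsum_eq_zero_of_not_summable h] at hπ1
  have key := sSup_variationalFunctional hπpos hπs hV
  unfold variationalFunctional at key
  refine ⟨key, ?_⟩
  rw [key, lt_top_iff_ne_top, Ne, EReal.coe_ennreal_eq_top_iff, ← Ne,
    tsum_ofReal_ne_top_iff_summable fun x => by have := hπpos x; positivity]
end

section
/- Let α ∈ (0,1) and (c_x)_{x≥1} satisfy 0 < c_x < 1/2 and 0 < liminf_{x→∞} c_x x^{α} ≤ limsup_{x→∞} c_x x^{α} < ∞. Let {X_n} be the birth and death chain on ℤ₊ with p(0,1) = 1, p(x,x+1) = p_x = 1/2 − c_x, p(x,x−1) = q_x = 1/2 + c_x for x ≥ 1, with invariant probability measure π(x) = Z^{−1} ∏_{k=1}^{x} p_{k−1}/q_k, and let P be the transition operator on L²(π). Let V ∈ L²(π) with ∑_x V(x)π(x) = 0. Then ||V||²_{−1} := sup_{φ ∈ L²(π)} { 2⟨V,φ⟩_π − ⟨(I−P)φ,φ⟩_π } < ∞ if and only if ∑_{x=0}^{∞} π(x)^{−1} ( ∑_{y=0}^{x} V(y)π(y) )² < ∞. -/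
/-!
Write `S(x) = ∑_{y ≤ x} V(y)π(y)` and `a(x) = π(x)p(x) = π(x+1)q(x+1)` (detailed balance).
Summation by parts turns `⟨V, φ⟩_π` into `-∑ S(x) (φ(x+1) - φ(x))`, and detailed balance turns
`⟨(I-P)φ, φ⟩_π` into the gradient form `∑ a(x) (φ(x+1) - φ(x))²`. Completing the square in each
gradient `φ(x+1) - φ(x)` bounds the variational functional by `∑ S(x)²/a(x)`, and the test
functions with gradient `-S/a` on `[0, N)` and `0` afterwards attain the partial sums of this
series, so `‖V‖²₋₁ = ∑ S²/a`. Since `c_x → 0`, `p_x → 1/2` and `a ≍ π`.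

The drift bound `c_x ≥ c₀ x^{-α}` with `α < 1` gives `πt(x+1)/πt(x) ≤ 1 - 2c_x`, which makes
`x² πt(x)` eventually nonincreasing, so `∑ πt < ∞` and `π` is a genuine probability measure.
-/

open Filter Topology Finset

lemma abs_mul_mul_le_of_nonneg {w f g : ℝ} (hw : 0 ≤ w) :
    |w * (f * g)| ≤ (w * f ^ 2 + w * g ^ 2) / 2 := by
  rw [abs_mul, abs_of_nonneg hw, abs_mul]
  nlinarith [mul_nonneg hw (sq_nonneg (|f| - |g|)), sq_abs f, sq_abs g]

lemma neg_two_mul_mul_sub_mul_sq_le {a s g : ℝ} (ha : 0 < a) :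
    -2 * (s * g) - a * g ^ 2 ≤ a⁻¹ * s ^ 2 := by
  have hsq : a * (a⁻¹ * s + g) ^ 2 = a⁻¹ * s ^ 2 + 2 * (s * g) + a * g ^ 2 := by
    field_simp
    ring
  nlinarith [mul_nonneg ha.le (sq_nonneg (a⁻¹ * s + g))]

section WeightedSquares

variable {w f g : ℕ → ℝ}

lemma summable_mul_mul_of_summable_mul_sq (hw : ∀ x, 0 ≤ w x)
    (hf : Summable fun x => w x * f x ^ 2) (hg : Summable fun x => w x * g x ^ 2) :
    Summable fun x => w x * (f x * g x) :=
  .of_norm_bounded ((hf.add hg).div_const 2) fun x => abs_mul_mul_le_of_nonneg (hw x)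

lemma tendsto_mul_mul_of_summable_mul_sq (hw : ∀ x, 0 ≤ w x)
    (hf : Summable fun x => w x * f x ^ 2) (hg : Summable fun x => w x * g x ^ 2) :
    Tendsto (fun x => w x * (f x * g x)) atTop (𝓝 0) :=
  squeeze_zero_norm (fun x => abs_mul_mul_le_of_nonneg (hw x))
    (by simpa using (hf.tendsto_atTop_zero.add hg.tendsto_atTop_zero).div_const 2)

end WeightedSquares

section Gradient

variable {π a φ : ℕ → ℝ}

lemma summable_mul_sq_of_le (ha : ∀ x, 0 ≤ a x) (haπ : ∀ x, a x ≤ π x)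
    (hφ : Summable fun x => φ x ^ 2 * π x) : Summable fun x => a x * φ x ^ 2 :=
  .of_nonneg_of_le (fun x => mul_nonneg (ha x) (sq_nonneg _))
    (fun x => by rw [mul_comm]; exact mul_le_mul_of_nonneg_left (haπ x) (sq_nonneg _)) hφ

lemma summable_mul_sq_succ_of_le (ha : ∀ x, 0 ≤ a x) (haπ : ∀ x, a x ≤ π (x + 1))
    (hφ : Summable fun x => φ x ^ 2 * π x) : Summable fun x => a x * φ (x + 1) ^ 2 :=
  summable_mul_sq_of_le (π := fun x => π (x + 1)) (φ := fun x => φ (x + 1)) ha haπ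
    ((summable_nat_add_iff 1).2 hφ)

lemma summable_mul_mul_succ_of_le (ha : ∀ x, 0 ≤ a x) (haπ : ∀ x, a x ≤ π x)
    (haπ' : ∀ x, a x ≤ π (x + 1)) (hφ : Summable fun x => φ x ^ 2 * π x) :
    Summable fun x => a x * (φ x * φ (x + 1)) :=
  summable_mul_mul_of_summable_mul_sq ha (summable_mul_sq_of_le ha haπ hφ)
    (summable_mul_sq_succ_of_le ha haπ' hφ)

lemma summable_mul_sub_sq_of_le (ha : ∀ x, 0 ≤ a x) (haπ : ∀ x, a x ≤ π x)
    (haπ' : ∀ x, a x ≤ π (x + 1)) (hφ : Summable fun x => φ x ^ 2 * π x) :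
    Summable fun x => a x * (φ (x + 1) - φ x) ^ 2 := by
  have := ((summable_mul_sq_succ_of_le ha haπ' hφ).sub
    ((summable_mul_mul_succ_of_le ha haπ haπ' hφ).mul_left 2)).add
    (summable_mul_sq_of_le ha haπ hφ)
  exact this.congr fun x => by ring

end Gradient

lemma tsum_mul_eq_neg_tsum_mul_sub {f φ S : ℕ → ℝ} (hS : ∀ x, S x = ∑ y ∈ range (x + 1), f y)
    (hfφ : Summable fun x => f x * φ x) (hSφ : Summable fun x => S x * (φ (x + 1) - φ x))
    (hbdry : Tendsto (fun n => S n * φ n) atTop (𝓝 0)) :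
    ∑' x, f x * φ x = -∑' x, S x * (φ (x + 1) - φ x) := by
  have hparts : ∀ N, ∑ x ∈ range (N + 1), f x * φ x
      = S N * φ N - ∑ x ∈ range N, S x * (φ (x + 1) - φ x) := fun N => by
    simpa [hS, mul_comm] using sum_range_by_parts φ f (N + 1)
  have hlim := hbdry.sub (hSφ.hasSum.tendsto_sum_nat)
  rw [zero_sub, ← funext hparts] at hlim
  exact tendsto_nhds_unique ((hfφ.hasSum.tendsto_sum_nat).comp (tendsto_add_atTop_nat 1)) hlim

section BirthDeath

variable {p q π φ : ℕ → ℝ} {pm : ℕ → ℕ → ℝ}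

lemma tsum_birthDeath_zero
    (hpm : ∀ x y, pm x y = if y = x + 1 then p x else if y + 1 = x then q x else 0) :
    ∑' y, pm 0 y * φ y = p 0 * φ 1 := by
  rw [tsum_eq_single 1 fun y hy => by simp [hpm, hy]]
  simp [hpm]

lemma tsum_birthDeath_succ
    (hpm : ∀ x y, pm x y = if y = x + 1 then p x else if y + 1 = x then q x else 0) (n : ℕ) :
    ∑' y, pm (n + 1) y * φ y = p (n + 1) * φ (n + 2) + q (n + 1) * φ n := by
  rw [tsum_eq_sum (s := {n + 2, n}) fun y hy => ?_, sum_pair (by omega)]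
  · simp [hpm, show n ≠ n + 1 + 1 by omega]
  · simp only [mem_insert, mem_singleton, not_or] at hy
    simp [hpm, hy.1, hy.2]

lemma tsum_birthDeath_dirichlet
    (hpm : ∀ x y, pm x y = if y = x + 1 then p x else if y + 1 = x then q x else 0)
    (hp0 : p 0 = 1) (hpq : ∀ x ≥ 1, p x + q x = 1) (hdb : ∀ x, π x * p x = π (x + 1) * q (x + 1))
    (ha : ∀ x, 0 ≤ π x * p x) (haπ : ∀ x, π x * p x ≤ π x)
    (haπ' : ∀ x, π x * p x ≤ π (x + 1)) (hφ : Summable fun x => φ x ^ 2 * π x) :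
    ∑' x, (φ x - ∑' y, pm x y * φ y) * φ x * π x
      = ∑' x, π x * p x * (φ (x + 1) - φ x) ^ 2 := by
  set u : ℕ → ℝ := fun x => π x * p x * (φ x - φ (x + 1)) * φ x
  set w : ℕ → ℝ := fun x => π x * p x * (φ (x + 1) - φ x) * φ (x + 1)
  have hcross := summable_mul_mul_succ_of_le ha haπ haπ' hφ
  have hu : Summable u :=
    ((summable_mul_sq_of_le ha haπ hφ).sub hcross).congr fun x => by simp only [u]; ring
  have hw : Summable w :=
    ((summable_mul_sq_succ_of_le ha haπ' hφ).sub hcross).congr fun x => by simp only [w]; ring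
  have hu' : Summable fun n => u (n + 1) := (summable_nat_add_iff 1).2 hu
  have hzero : (φ 0 - ∑' y, pm 0 y * φ y) * φ 0 * π 0 = u 0 := by
    simp only [tsum_birthDeath_zero hpm, u, hp0]
    ring
  have hsucc : ∀ n, (φ (n + 1) - ∑' y, pm (n + 1) y * φ y) * φ (n + 1) * π (n + 1)
      = u (n + 1) + w n := fun n => by
    simp only [tsum_birthDeath_succ hpm, u, w]
    linear_combination (-π (n + 1) * φ (n + 1) ^ 2) * hpq (n + 1) (by omega)
      - (φ (n + 1) - φ n) * φ (n + 1) * hdb n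
  have hsum : Summable fun x => (φ x - ∑' y, pm x y * φ y) * φ x * π x :=
    (summable_nat_add_iff 1).1 ((hu'.add hw).congr fun n => (hsucc n).symm)
  rw [hsum.tsum_eq_zero_add, hzero, tsum_congr hsucc, hu'.tsum_add hw, ← add_assoc,
    ← hu.tsum_eq_zero_add, ← hu.tsum_add hw]
  exact tsum_congr fun x => by simp only [u, w]; ring

end BirthDeath

section Variational

variable {π a V S : ℕ → ℝ}

lemma energy_le_tsum_inv_mul_sq (hS : ∀ x, S x = ∑ y ∈ range (x + 1), V y * π y)
    (ha : ∀ x, 0 < a x) (haπ : ∀ x, a x ≤ π x) (haπ' : ∀ x, a x ≤ π (x + 1))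
    (hV : Summable fun x => V x ^ 2 * π x) (hSa : Summable fun x => (a x)⁻¹ * S x ^ 2)
    {φ : ℕ → ℝ} (hφ : Summable fun x => φ x ^ 2 * π x) :
    2 * ∑' x, V x * φ x * π x - ∑' x, a x * (φ (x + 1) - φ x) ^ 2
      ≤ ∑' x, (a x)⁻¹ * S x ^ 2 := by
  have ha0 : ∀ x, 0 ≤ a x := fun x => (ha x).le
  have hπ0 : ∀ x, 0 ≤ π x := fun x => (ha0 x).trans (haπ x)
  have hgrad := summable_mul_sub_sq_of_le ha0 haπ haπ' hφ
  have hSa' : Summable fun x => a x * ((a x)⁻¹ * S x) ^ 2 :=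
    hSa.congr fun x => by field_simp [(ha x).ne']
  have hVφ : Summable fun x => V x * π x * φ x :=
    (summable_mul_mul_of_summable_mul_sq hπ0 (hV.congr fun x => mul_comm _ _)
      (hφ.congr fun x => mul_comm _ _)).congr fun x => by ring
  have hSg : Summable fun x => S x * (φ (x + 1) - φ x) :=
    (summable_mul_mul_of_summable_mul_sq ha0 hSa' hgrad).congr fun x => by
      field_simp [(ha x).ne']
  have hbdry : Tendsto (fun n => S n * φ n) atTop (𝓝 0) :=
    (tendsto_mul_mul_of_summable_mul_sq ha0 hSa' (summable_mul_sq_of_le ha0 haπ hφ)).congr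
      fun x => by field_simp [(ha x).ne']
  have habel : ∑' x, V x * φ x * π x = -∑' x, S x * (φ (x + 1) - φ x) := by
    rw [← tsum_mul_eq_neg_tsum_mul_sub hS hVφ hSg hbdry]
    exact tsum_congr fun x => by ring
  calc 2 * ∑' x, V x * φ x * π x - ∑' x, a x * (φ (x + 1) - φ x) ^ 2
      = ∑' x, (-2 * (S x * (φ (x + 1) - φ x)) - a x * (φ (x + 1) - φ x) ^ 2) := by
        rw [habel, (hSg.mul_left (-2)).tsum_sub hgrad, tsum_mul_left]
        ring
    _ ≤ ∑' x, (a x)⁻¹ * S x ^ 2 :=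
        ((hSg.mul_left (-2)).sub hgrad).tsum_le_tsum
          (fun x => neg_two_mul_mul_sub_mul_sq_le (ha x)) hSa

lemma exists_energy_eq_sum_range (hS : ∀ x, S x = ∑ y ∈ range (x + 1), V y * π y)
    (ha : ∀ x, a x ≠ 0) (hπ : Summable π) (hVπ : Summable fun x => V x * π x)
    (hS0 : Tendsto S atTop (𝓝 0)) (N : ℕ) :
    ∃ φ : ℕ → ℝ, (Summable fun x => φ x ^ 2 * π x) ∧
      2 * ∑' x, V x * φ x * π x - ∑' x, a x * (φ (x + 1) - φ x) ^ 2
        = ∑ x ∈ range N, (a x)⁻¹ * S x ^ 2 := by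
  -- the pointwise maximiser `-S/a` of the completed square, truncated at `N`
  set g : ℕ → ℝ := fun x => if x < N then -((a x)⁻¹ * S x) else 0
  set φ : ℕ → ℝ := fun x => ∑ y ∈ range x, g y
  have hΔ : ∀ x, φ (x + 1) - φ x = g x := fun x => by simp [φ, sum_range_succ]
  have hconst : ∀ n ≥ N, φ n = φ N := fun n hn => by
    induction n, hn using Nat.le_induction with
    | base => rfl
    | succ n hn ih => rw [← ih, ← sub_eq_zero, hΔ]; simp [g, hn.not_gt]
  have hSg : ∀ x, S x * g x = -(a x * g x ^ 2) := fun x => by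
    by_cases hx : x < N
    · simp only [g, if_pos hx]
      field_simp [ha x]
    · simp [g, hx]
  have henergy : ∑' x, a x * g x ^ 2 = ∑ x ∈ range N, (a x)⁻¹ * S x ^ 2 := by
    rw [tsum_eq_sum (s := range N) fun x hx => by simp [g, not_lt.1 (mt mem_range.2 hx)]]
    refine sum_congr rfl fun x hx => ?_
    simp only [g, if_pos (mem_range.1 hx)]
    field_simp [ha x]
  have htail {f : ℕ → ℝ} (hf : Summable f) : Summable fun x => f x * φ x :=
    (summable_nat_add_iff N).1 ((((summable_nat_add_iff N).2 hf).mul_right (φ N)).congr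
      fun n => by rw [hconst (n + N) (Nat.le_add_left N n)])
  have hφ : Summable fun x => φ x ^ 2 * π x :=
    (htail (htail hπ)).congr fun x => by ring
  have hgsum : Summable fun x => S x * (φ (x + 1) - φ x) :=
    (summable_of_ne_finset_zero (s := range N) fun x hx => by
      simp [g, not_lt.1 (mt mem_range.2 hx)] : Summable fun x => S x * g x).congr
      fun x => by rw [hΔ]
  have hbdry : Tendsto (fun n => S n * φ n) atTop (𝓝 0) := by
    simpa using (hS0.mul_const (φ N)).congr' ((eventually_ge_atTop N).mono fun n hn => by
      rw [hconst n hn])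
  refine ⟨φ, hφ, ?_⟩
  rw [show ∑' x, V x * φ x * π x = ∑' x, V x * π x * φ x from tsum_congr fun x => by ring,
    tsum_mul_eq_neg_tsum_mul_sub hS (htail hVπ) hgsum hbdry]
  simp only [hΔ, hSg, tsum_neg, henergy]
  ring

theorem bddAbove_energy_iff_summable {E : (ℕ → ℝ) → ℝ}
    (hE : ∀ φ, (Summable fun x => φ x ^ 2 * π x) → E φ = ∑' x, a x * (φ (x + 1) - φ x) ^ 2)
    (hS : ∀ x, S x = ∑ y ∈ range (x + 1), V y * π y)
    (ha : ∀ x, 0 < a x) (haπ : ∀ x, a x ≤ π x) (haπ' : ∀ x, a x ≤ π (x + 1))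
    (hπ : Summable π) (hV : Summable fun x => V x ^ 2 * π x) (hVmean : ∑' x, V x * π x = 0) :
    BddAbove {r : ℝ | ∃ φ : ℕ → ℝ, (Summable fun x => φ x ^ 2 * π x) ∧
        r = 2 * ∑' x, V x * φ x * π x - E φ} ↔
      Summable fun x => (a x)⁻¹ * S x ^ 2 := by
  have hπ0 : ∀ x, 0 ≤ π x := fun x => (ha x).le.trans (haπ x)
  have hVπ : Summable fun x => V x * π x :=
    (summable_mul_mul_of_summable_mul_sq (g := 1) hπ0 (hV.congr fun x => mul_comm _ _)
      (hπ.congr fun x => by simp)).congr fun x => by simp [mul_comm]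
  have hS0 : Tendsto S atTop (𝓝 0) := by
    rw [funext hS, ← hVmean]
    exact hVπ.hasSum.tendsto_sum_nat.comp (tendsto_add_atTop_nat 1)
  constructor
  · rintro ⟨B, hB⟩
    refine summable_of_sum_range_le (c := B)
      (fun x => mul_nonneg (inv_nonneg.2 (ha x).le) (sq_nonneg _)) fun N => ?_
    obtain ⟨φ, hφ, hN⟩ := exists_energy_eq_sum_range hS (fun x => (ha x).ne') hπ hVπ hS0 N
    exact hB ⟨φ, hφ, by rw [hE φ hφ, hN]⟩
  · intro hSa
    refine ⟨∑' x, (a x)⁻¹ * S x ^ 2, ?_⟩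
    rintro r ⟨φ, hφ, rfl⟩
    rw [hE φ hφ]
    exact energy_le_tsum_inv_mul_sq hS ha haπ haπ' hV hSa hφ

end Variational

lemma summable_inv_mul_iff_of_le {a π f : ℕ → ℝ} {K : ℝ} (ha : ∀ x, 0 < a x)
    (haπ : ∀ x, a x ≤ π x) (hπa : ∀ᶠ x in atTop, π x ≤ K * a x) (hf : ∀ x, 0 ≤ f x) :
    (Summable fun x => (a x)⁻¹ * f x) ↔ Summable fun x => (π x)⁻¹ * f x := by
  have hπ : ∀ x, 0 < π x := fun x => (ha x).trans_le (haπ x)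
  refine ⟨fun h => h.of_nonneg_of_le (fun x => mul_nonneg (inv_nonneg.2 (hπ x).le) (hf x))
    fun x => mul_le_mul_of_nonneg_right (inv_anti₀ (ha x) (haπ x)) (hf x), fun h => ?_⟩
  refine (h.mul_left K).of_norm_bounded_eventually_nat (hπa.mono fun x hx => ?_)
  have hinv : (a x)⁻¹ ≤ K * (π x)⁻¹ := by
    rw [← div_eq_mul_inv, le_div_iff₀ (hπ x), inv_mul_le_iff₀ (ha x), mul_comm]
    exact hx
  rw [Real.norm_of_nonneg (mul_nonneg (inv_nonneg.2 (ha x).le) (hf x)), ← mul_assoc]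
  exact mul_le_mul_of_nonneg_right hinv (hf x)

lemma tendsto_zero_of_mul_rpow_le {α : ℝ} {c : ℕ → ℝ} (hα : 0 < α) (hc : ∀ᶠ x in atTop, 0 ≤ c x)
    (hC : ∃ C : ℝ, ∀ᶠ x : ℕ in atTop, c x * (x : ℝ) ^ α ≤ C) : Tendsto c atTop (𝓝 0) := by
  obtain ⟨C, hC⟩ := hC
  have hdecay : Tendsto (fun x : ℕ => C * ((x : ℝ) ^ α)⁻¹) atTop (𝓝 0) := by
    simpa using ((tendsto_rpow_atTop hα).comp tendsto_natCast_atTop_atTop).inv_tendsto_atTop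
      |>.const_mul C
  refine squeeze_zero' hc ?_ hdecay
  filter_upwards [hC, eventually_ge_atTop 1] with x hx hx1
  rw [← div_eq_mul_inv, le_div_iff₀ (by positivity)]
  exact hx

lemma summable_of_eventually_succ_mul_sq_le {u : ℕ → ℝ} (hu : ∀ x, 0 ≤ u x)
    (h : ∀ᶠ x : ℕ in atTop, u (x + 1) * ((x : ℝ) + 1) ^ 2 ≤ u x * (x : ℝ) ^ 2) :
    Summable u := by
  obtain ⟨M, hM⟩ := eventually_atTop.1 h
  have hbound : ∀ x ≥ M, u x * (x : ℝ) ^ 2 ≤ u M * (M : ℝ) ^ 2 := fun x hx => by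
    induction x, hx using Nat.le_induction with
    | base => rfl
    | succ n hn ih => exact_mod_cast (hM n hn).trans ih
  refine ((Real.summable_one_div_nat_pow.2 one_lt_two).mul_left (u M * (M : ℝ) ^ 2))
    |>.of_norm_bounded_eventually_nat ?_
  filter_upwards [eventually_ge_atTop M, eventually_ge_atTop 1] with x hx hx1
  rw [Real.norm_of_nonneg (hu x), mul_one_div, le_div_iff₀ (by positivity)]
  exact hbound x hx

lemma eventually_one_sub_two_mul_mul_sq_le {α : ℝ} {c : ℕ → ℝ} (hα : α < 1)
    (hc : ∃ c₀ > 0, ∀ᶠ x : ℕ in atTop, c₀ ≤ c x * (x : ℝ) ^ α) :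
    ∀ᶠ x : ℕ in atTop, (1 - 2 * c x) * ((x : ℝ) + 1) ^ 2 ≤ (x : ℝ) ^ 2 := by
  obtain ⟨c₀, hc₀, hc⟩ := hc
  have hgrowth : Tendsto (fun x : ℕ => c₀ * (x : ℝ) ^ (1 - α)) atTop atTop :=
    ((tendsto_rpow_atTop (by linarith)).comp tendsto_natCast_atTop_atTop).const_mul_atTop hc₀
  filter_upwards [hc, hgrowth.eventually_ge_atTop 1, eventually_ge_atTop 1] with x hcx hx hx1
  have hx0 : (0 : ℝ) < x := by exact_mod_cast hx1
  have hcx : 1 ≤ c x * x := calc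
    1 ≤ c₀ * (x : ℝ) ^ (1 - α) := hx
    _ ≤ c x * (x : ℝ) ^ α * (x : ℝ) ^ (1 - α) := by gcongr
    _ = c x * x := by rw [mul_assoc, ← Real.rpow_add hx0, add_sub_cancel, Real.rpow_one]
  have hc0 : 0 < c x := pos_of_mul_pos_left (one_pos.trans_le hcx) hx0.le
  nlinarith

lemma summable_of_succ_le_one_sub_two_mul {α : ℝ} {c u : ℕ → ℝ} (hα : α < 1)
    (hc : ∃ c₀ > 0, ∀ᶠ x : ℕ in atTop, c₀ ≤ c x * (x : ℝ) ^ α) (hu : ∀ x, 0 ≤ u x)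
    (hsucc : ∀ᶠ x in atTop, u (x + 1) ≤ (1 - 2 * c x) * u x) : Summable u := by
  refine summable_of_eventually_succ_mul_sq_le hu ?_
  filter_upwards [hsucc, eventually_one_sub_two_mul_mul_sq_le hα hc] with x hx hcx
  calc u (x + 1) * ((x : ℝ) + 1) ^ 2 ≤ (1 - 2 * c x) * u x * ((x : ℝ) + 1) ^ 2 := by gcongr
    _ = u x * ((1 - 2 * c x) * ((x : ℝ) + 1) ^ 2) := by ring
    _ ≤ u x * (x : ℝ) ^ 2 := by gcongr; exact hu x

section DriftChain

variable {α : ℝ} {c p q πt : ℕ → ℝ}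

lemma birthDeath_coeff_bounds (hc : ∀ x ≥ 1, 0 < c x ∧ c x < 1 / 2) (hp0 : p 0 = 1)
    (hp : ∀ x ≥ 1, p x = 1 / 2 - c x) (hq : ∀ x ≥ 1, q x = 1 / 2 + c x) (x : ℕ) :
    0 < p x ∧ p x ≤ 1 ∧ 0 < q (x + 1) ∧ q (x + 1) ≤ 1 := by
  have hcq := hc (x + 1) (by omega)
  rw [hq _ (by omega)]
  rcases x with _ | x
  · rw [hp0]
    refine ⟨one_pos, le_rfl, ?_, ?_⟩ <;> linarith
  · have hcp := hc (x + 1) (by omega)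
    rw [hp _ (by omega)]
    refine ⟨?_, ?_, ?_, ?_⟩ <;> linarith

lemma pos_and_summable_prod_of_drift (hα : α < 1) (hc : ∀ x ≥ 1, 0 < c x ∧ c x < 1 / 2)
    (hliminf : ∃ c₀ > 0, ∀ᶠ x : ℕ in atTop, c₀ ≤ c x * (x : ℝ) ^ α) (hp0 : p 0 = 1)
    (hp : ∀ x ≥ 1, p x = 1 / 2 - c x) (hq : ∀ x ≥ 1, q x = 1 / 2 + c x)
    (hπt : ∀ x, πt x = ∏ k ∈ Icc 1 x, p (k - 1) / q k) :
    (∀ x, 0 < πt x) ∧ Summable πt := by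
  have hcoef := birthDeath_coeff_bounds hc hp0 hp hq
  have hπt_succ : ∀ x, πt (x + 1) = p x / q (x + 1) * πt x := fun x => by
    rw [hπt, hπt, prod_Icc_succ_top (by omega), add_tsub_cancel_right, mul_comm]
  have hπt_pos : ∀ x, 0 < πt x := fun x => by
    induction x with
    | zero => simp [hπt]
    | succ x ih => rw [hπt_succ]; exact mul_pos (div_pos (hcoef x).1 (hcoef x).2.2.1) ih
  refine ⟨hπt_pos, summable_of_succ_le_one_sub_two_mul hα hliminf (fun x => (hπt_pos x).le) ?_⟩
  filter_upwards [eventually_ge_atTop 1] with x hx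
  rw [hπt_succ]
  refine mul_le_mul_of_nonneg_right ?_ (hπt_pos x).le
  rw [hp x hx, hq (x + 1) (by omega), div_le_iff₀ (by linarith [hc (x + 1) (by omega)])]
  nlinarith [hc x hx, hc (x + 1) (by omega)]

end DriftChain

lemma detailed_balance_of_eq_prod {p q πt π : ℕ → ℝ}
    (hπt : ∀ x, πt x = ∏ k ∈ Icc 1 x, p (k - 1) / q k) (hπ : ∀ x, π x = πt x / ∑' y, πt y)
    {x : ℕ} (hq : q (x + 1) ≠ 0) : π x * p x = π (x + 1) * q (x + 1) := by
  rw [hπ, hπ, hπt, hπt, prod_Icc_succ_top (by omega), add_tsub_cancel_right]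
  field_simp

/-- For the birth and death chain with `p(0,1) = 1`, `p(x,x+1) = 1/2 - cₓ`,
`p(x,x-1) = 1/2 + cₓ`, `α ∈ (0,1)`, `0 < liminf cₓ xᵅ ≤ limsup cₓ xᵅ < ∞`, invariant
probability measure `π(x) = Z⁻¹ ∏_{k=1}^x p_{k-1}/q_k`, transition operator `P`, and a
mean-zero `V ∈ L²(π)`, the Kipnis–Varadhan norm
`‖V‖²₋₁ = sup_{φ ∈ L²(π)} {2⟨V,φ⟩_π - ⟨(I-P)φ,φ⟩_π}` is finite (i.e. the set of its values is
bounded above) if and only if `∑ₓ π(x)⁻¹ (∑_{y=0}^x V(y)π(y))² < ∞`. -/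
theorem stmt18 (α : ℝ) (hα0 : 0 < α) (hα1 : α < 1) (c : ℕ → ℝ)
    (hc : ∀ x ≥ 1, 0 < c x ∧ c x < 1 / 2)
    (hliminf : ∃ c₀ > 0, ∀ᶠ x : ℕ in atTop, c₀ ≤ c x * (x : ℝ) ^ α)
    (hlimsup : ∃ C : ℝ, ∀ᶠ x : ℕ in atTop, c x * (x : ℝ) ^ α ≤ C)
    (p q : ℕ → ℝ) (hp0 : p 0 = 1)
    (hp : ∀ x ≥ 1, p x = 1 / 2 - c x)
    (hq : ∀ x ≥ 1, q x = 1 / 2 + c x)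
    (pm : ℕ → ℕ → ℝ)
    (hpm : ∀ x y, pm x y = if y = x + 1 then p x else if y + 1 = x then q x else 0)
    (πt : ℕ → ℝ)
    (hπt : ∀ x, πt x = ∏ k ∈ Finset.Icc 1 x, p (k - 1) / q k)
    (π : ℕ → ℝ) (hπ : ∀ x, π x = πt x / ∑' y, πt y)
    (V : ℕ → ℝ) (hV : Summable fun x => V x ^ 2 * π x)
    (hVmean : ∑' x, V x * π x = 0) :
    BddAbove {r : ℝ | ∃ φ : ℕ → ℝ, (Summable fun x => φ x ^ 2 * π x) ∧
        r = 2 * (∑' x, V x * φ x * π x) -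
          ∑' x, (φ x - ∑' y, pm x y * φ y) * φ x * π x} ↔
      Summable fun x : ℕ => (π x)⁻¹ * (∑ y ∈ Finset.range (x + 1), V y * π y) ^ 2 := by
  obtain ⟨hπt_pos, hπt_sum⟩ := pos_and_summable_prod_of_drift hα1 hc hliminf hp0 hp hq hπt
  have hcoef := birthDeath_coeff_bounds hc hp0 hp hq
  have hπ_pos : ∀ x, 0 < π x := fun x => by
    rw [hπ]
    exact div_pos (hπt_pos x) (hπt_sum.tsum_pos (fun x => (hπt_pos x).le) 0 (hπt_pos 0))
  have hdb : ∀ x, π x * p x = π (x + 1) * q (x + 1) := fun x =>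
    detailed_balance_of_eq_prod hπt hπ (hcoef x).2.2.1.ne'
  have ha : ∀ x, 0 < π x * p x := fun x => mul_pos (hπ_pos x) (hcoef x).1
  have haπ : ∀ x, π x * p x ≤ π x := fun x => mul_le_of_le_one_right (hπ_pos x).le (hcoef x).2.1
  have haπ' : ∀ x, π x * p x ≤ π (x + 1) := fun x =>
    (hdb x).symm ▸ mul_le_of_le_one_right (hπ_pos _).le (hcoef x).2.2.2
  have hp_ge : ∀ᶠ x in atTop, 1 / 4 ≤ p x := by
    have hc0 := tendsto_zero_of_mul_rpow_le hα0
      ((eventually_ge_atTop 1).mono fun x hx => (hc x hx).1.le) hlimsup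
    filter_upwards [hc0.eventually_le_const (by norm_num : (0 : ℝ) < 1 / 4),
      eventually_ge_atTop 1] with x hcx hx
    linarith [hp x hx]
  have hpq : ∀ x ≥ 1, p x + q x = 1 := fun x hx => by rw [hp x hx, hq x hx]; ring
  rw [bddAbove_energy_iff_summable (a := fun x => π x * p x)
    (fun φ hφ => tsum_birthDeath_dirichlet hpm hp0 hpq hdb (fun x => (ha x).le) haπ haπ' hφ)
    (fun _ => rfl) ha haπ haπ' ((hπt_sum.div_const _).congr fun x => (hπ x).symm) hV hVmean]
  exact summable_inv_mul_iff_of_le (K := 4) ha haπ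
    (hp_ge.mono fun x hx => by nlinarith [hπ_pos x]) fun x => sq_nonneg _
end
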